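/- arXiv:2204.00457 — 9 statements merged into one kernel-verified Lean document; each statement's English description precedes it below -/
import Mathlib

section
/- Let N ≥ 1, let U ∈ ℂ^{N×N} be invertible, and let S ∈ ℂ^{N×N} be a matrix such that for every b ∈ ℂ^N the matrix U·diag(b)·U⁻¹ can be expressed as a polynomial in S with complex coefficients. Then S is itself a graph filter, i.e. there exists a ∈ ℂ^N such that S = U·diag(a)·U⁻¹. -/
/-!
The entries `bᵢ = i` are pairwise distinct, and `U * diagonal b * U⁻¹` is a polynomial in `S`,
so it commutes with `S`. Conjugating back, `U⁻¹ * S * U` commutes with `diagonal b`; distinct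
diagonal entries force it to be diagonal, i.e. `S` is a graph filter.
-/

open Matrix Polynomial

theorem Commute.units_conj_iff {M : Type*} [Monoid M] {a b : M} (u : Mˣ) :
    Commute (↑u * a * ↑u⁻¹) (↑u * b * ↑u⁻¹) ↔ Commute a b := by
  simp only [Commute, SemiconjBy, mul_assoc, Units.inv_mul_cancel_left]
  simp only [← mul_assoc, Units.mul_left_inj]
  simp only [mul_assoc, Units.mul_right_inj]

theorem Matrix.commute_conj_iff {n R : Type*} [Fintype n] [DecidableEq n] [CommRing R]
    {U A B : Matrix n n R} (hU : IsUnit U) :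
    Commute (U * A * U⁻¹) (U * B * U⁻¹) ↔ Commute A B := by
  simpa [coe_units_inv] using Commute.units_conj_iff hU.unit

theorem Matrix.IsDiag.of_commute_diagonal {n R : Type*} [Fintype n] [DecidableEq n]
    [CommRing R] [NoZeroDivisors R] {A : Matrix n n R} {d : n → R}
    (hd : Function.Injective d) (h : Commute A (diagonal d)) : A.IsDiag := by
  intro i j hij
  have hentry : A i j * d j = d i * A i j := by
    simpa [mul_diagonal, diagonal_mul] using congr_fun₂ h.eq i j
  have hzero : A i j * (d j - d i) = 0 := by rw [mul_sub, hentry, mul_comm, sub_self]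
  exact (mul_eq_zero.mp hzero).resolve_right (sub_ne_zero.mpr (hd.ne (Ne.symm hij)))

theorem Polynomial.commute_aeval_self {R A : Type*} [CommSemiring R] [Semiring A] [Algebra R A]
    (x : A) (p : R[X]) : Commute x (aeval x p) := by
  simpa using (commute_X p).map (aeval x)

theorem atomic_filter_is_filter_general (N : ℕ)
    (U S : Matrix (Fin N) (Fin N) ℂ) (hU : IsUnit U)
    (h : ∀ b : Fin N → ℂ, ∃ p : Polynomial ℂ,
      U * Matrix.diagonal b * U⁻¹ = Polynomial.aeval S p) :
    ∃ a : Fin N → ℂ, S = U * Matrix.diagonal a * U⁻¹ := by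
  have hdet : IsUnit U.det := (isUnit_iff_isUnit_det U).mp hU
  set b : Fin N → ℂ := fun i => (i : ℂ)
  have hb : Function.Injective b := Nat.cast_injective.comp Fin.val_injective
  obtain ⟨p, hp⟩ := h b
  set T := U⁻¹ * S * U
  have hS : S = U * T * U⁻¹ := by
    simp only [T, mul_assoc, mul_nonsing_inv _ hdet, mul_one,
      mul_nonsing_inv_cancel_left (h := hdet)]
  have hcomm : Commute S (U * diagonal b * U⁻¹) := hp ▸ commute_aeval_self S p
  rw [hS, commute_conj_iff hU] at hcomm
  exact ⟨T.diag, by rw [(IsDiag.of_commute_diagonal hb hcomm).diagonal_diag, ← hS]⟩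

/-- If every graph filter `U * diagonal b * U⁻¹` is a polynomial in `S`,
then `S` is itself a graph filter. -/
theorem atomic_filter_is_filter (N : ℕ) (hN : 1 ≤ N)
    (U S : Matrix (Fin N) (Fin N) ℂ) (hU : IsUnit U)
    (h : ∀ b : Fin N → ℂ, ∃ p : Polynomial ℂ,
      U * Matrix.diagonal b * U⁻¹ = Polynomial.aeval S p) :
    ∃ a : Fin N → ℂ, S = U * Matrix.diagonal a * U⁻¹ :=
  atomic_filter_is_filter_general N U S hU h
end

section
/- Let N ≥ 1, let U ∈ ℂ^{N×N} be unitary with columns u_1, …, u_N such that u_1 = (1/√N)·𝟏, where 𝟏 ∈ ℝ^N is the all-ones vector, and let a ∈ ℂ^N have pairwise distinct components. Then the atomic filter H_a = U·diag(a)·U⁻¹ is a real matrix if and only if there exist a bijection p of the set {2, …, N} onto itself and complex numbers c_2, …, c_N of unit modulus such that: a_1 ∈ ℝ, a_k = conj(a_{p(k)}) for k = 2, …, N, and u_k = c_k · conj(u_{p(k)}) for k = 2, …, N (where conj denotes entrywise complex conjugation). -/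
/-!
Let `W` be the entrywise conjugate of `U`. Since `conj H = W diag(ā) W*`, the filter `H` is real
iff the unitary `V = U* W` intertwines `diag a` and `diag ā`. An entry `V k l` can then be nonzero
only if `a k = conj (a l)`, and as the `a k` are distinct this singles out one index `l = σ k`
per row: `V` is a permutation matrix twisted by unimodular scalars. Reading `W = U V` column by
column gives `conj u_{σ k} = V k (σ k) • u_k`, and since the real column `u_1` is orthogonal to
all the other columns, `σ` fixes it.
-/

open Matrix Function Equiv

theorem mul_star_mul_eq_of_mul_mul_star_eq {R : Type*} [Monoid R] [StarMul R] {u w x y : R}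
    (hu : u ∈ unitary R) (hw : w ∈ unitary R) (h : u * x * star u = w * y * star w) :
    x * (star u * w) = star u * w * y :=
  calc x * (star u * w) = star u * u * x * (star u * w) := by
        rw [Unitary.star_mul_self_of_mem hu, one_mul]
    _ = star u * (u * x * star u) * w := by simp only [mul_assoc]
    _ = star u * w * y * (star w * w) := by rw [h]; simp only [mul_assoc]
    _ = star u * w * y := by rw [Unitary.star_mul_self_of_mem hw, mul_one]

namespace Matrix

theorem map_star_eq_self_iff {m n : Type*} {M : Matrix m n ℂ} :
    M.map star = M ↔ ∀ i j, (M i j).im = 0 := by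
  simp [← Matrix.ext_iff, Complex.conj_eq_iff_im]

variable {ι R : Type*} [Fintype ι]

theorem mul_apply_of_ne_zero_iff {m : Type*} [NonUnitalNonAssocSemiring R] {A : Matrix m ι R}
    {V : Matrix ι ι R} {σ : Perm ι} (hσ : ∀ k l, V k l ≠ 0 ↔ σ k = l) (n : m) (k : ι) :
    (A * V) n (σ k) = A n k * V k (σ k) := by
  rw [mul_apply, Finset.sum_eq_single k (fun m _ hmk => ?_) (by simp)]
  rw [not_ne_iff.mp (mt (hσ m (σ k)).mp (σ.injective.ne hmk)), mul_zero]

variable [DecidableEq ι]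

theorem mul_diagonal_mul_star_apply [NonUnitalNonAssocSemiring R] [Star R] (U : Matrix ι ι R)
    (a : ι → R) (i j : ι) : (U * diagonal a * star U) i j = ∑ k, U i k * a k * star (U j k) := by
  rw [mul_apply]
  simp only [mul_diagonal, star_apply]

theorem apply_eq_of_diagonal_mul_eq_mul_diagonal [CommSemiring R] [IsCancelMulZero R]
    {V : Matrix ι ι R} {a b : ι → R} (h : diagonal a * V = V * diagonal b) {k l : ι}
    (hkl : V k l ≠ 0) : a k = b l := by
  have hkl' := congr_fun (congr_fun h k) l
  rw [diagonal_mul, mul_diagonal] at hkl'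
  exact mul_right_cancel₀ hkl (by rw [hkl', mul_comm])

theorem exists_apply_ne_zero_of_isUnit [Semiring R] [Nontrivial R] {V : Matrix ι ι R}
    (hV : IsUnit V) (k : ι) : ∃ l, V k l ≠ 0 := by
  obtain ⟨W, hW⟩ := hV.exists_right_inv
  by_contra! hk
  simpa [mul_apply, hk] using congr_fun (congr_fun hW k) k

theorem exists_perm_of_diagonal_mul_eq_mul_diagonal [CommSemiring R] [IsDomain R]
    {V : Matrix ι ι R} (hV : IsUnit V) {a b : ι → R} (ha : Injective a) (hb : Injective b)
    (h : diagonal a * V = V * diagonal b) : ∃ σ : Perm ι, ∀ k l, V k l ≠ 0 ↔ σ k = l := by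
  choose σ hσ using exists_apply_ne_zero_of_isUnit hV
  have hσa : ∀ k, a k = b (σ k) := fun k => apply_eq_of_diagonal_mul_eq_mul_diagonal h (hσ k)
  have hσinj : Injective σ := fun k k' hkk' => ha (by rw [hσa, hσa, hkk'])
  refine ⟨Equiv.ofBijective σ (Finite.injective_iff_bijective.mp hσinj), fun k l => ⟨?_, ?_⟩⟩
  · intro hkl
    exact hb ((hσa k).symm.trans (apply_eq_of_diagonal_mul_eq_mul_diagonal h hkl))
  · rintro rfl
    exact hσ k

theorem eq_of_forall_apply_eq_mul_apply [CommRing R] [StarRing R] [Nontrivial R]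
    {U : Matrix ι ι R} (hU : U ∈ unitaryGroup ι R) {k l : ι} {c : R} (hc : c ≠ 0)
    (h : ∀ n, U n k = c * U n l) : k = l := by
  have hlk : (star U * U) l k = c * (star U * U) l l := by
    simp only [mul_apply, star_apply, h, Finset.mul_sum]
    exact Finset.sum_congr rfl fun n _ => by ring
  by_contra hkl
  rw [mem_unitaryGroup_iff'.mp hU, one_apply_ne (Ne.symm hkl), one_apply_eq, mul_one] at hlk
  exact hc hlk.symm

variable {U : Matrix ι ι ℂ} {a : ι → ℂ}

theorem exists_perm_of_map_star_mul_diagonal_mul_star_eq_self (hU : U ∈ unitaryGroup ι ℂ)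
    (ha : Injective a) (h : (U * diagonal a * star U).map star = U * diagonal a * star U) :
    ∃ (σ : Perm ι) (c : ι → ℂ), (∀ k, ‖c k‖ = 1) ∧ (∀ k, a k = star (a (σ k))) ∧
      ∀ k n, U n k = c k * star (U n (σ k)) := by
  set W := U.map star
  have hW : W ∈ unitaryGroup ι ℂ := map_star_mem_unitaryGroup_iff.mpr hU
  set V := star U * W
  have hV : V ∈ unitaryGroup ι ℂ := mul_mem (Unitary.star_mem hU) hW
  have hconj : U * diagonal a * star U = W * diagonal (star a) * star W := by
    rw [← h]
    -- `Matrix.map_mul` needs the entrywise map as a ring homomorphism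
    change (U * diagonal a * star U).map (starRingEnd ℂ) = _
    rw [Matrix.map_mul, Matrix.map_mul, diagonal_map (map_zero _)]
    rfl
  have hDV : diagonal a * V = V * diagonal (star a) :=
    mul_star_mul_eq_of_mul_mul_star_eq hU hW hconj
  obtain ⟨σ, hσ⟩ := exists_perm_of_diagonal_mul_eq_mul_diagonal
    (Unitary.isUnit_coe (U := ⟨V, hV⟩)) ha (star_injective.comp ha) hDV
  have hcol : ∀ k n, star (U n (σ k)) = U n k * V k (σ k) := fun k n => by
    rw [← mul_apply_of_ne_zero_iff hσ, ← mul_assoc, Unitary.mul_star_self_of_mem hU, one_mul]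
    rfl
  have hunit : ∀ k, star (V k (σ k)) * V k (σ k) = 1 := fun k => by
    rw [← star_apply, ← mul_apply_of_ne_zero_iff hσ, Unitary.star_mul_self_of_mem hV, one_apply_eq]
  refine ⟨σ, fun k => star (V k (σ k)), fun k => ?_,
    fun k => apply_eq_of_diagonal_mul_eq_mul_diagonal hDV ((hσ k (σ k)).mpr rfl), fun k n => ?_⟩
  · exact CStarRing.norm_of_mem_unitary
      (Unitary.star_mem (Unitary.mem_iff_star_mul_self.mpr (hunit k)))
  · rw [hcol]
    linear_combination (-U n k) * hunit k

theorem map_star_mul_diagonal_mul_star_eq_self_of_perm (σ : Perm ι) (c : ι → ℂ)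
    (hc : ∀ k, ‖c k‖ = 1) (ha : ∀ k, a k = star (a (σ k)))
    (hU : ∀ k n, U n k = c k * star (U n (σ k))) :
    (U * diagonal a * star U).map star = U * diagonal a * star U := by
  have hcc : ∀ k, c k * star (c k) = 1 := fun k => by
    simpa [hc k] using RCLike.mul_conj (c k)
  ext i j
  rw [map_apply, mul_diagonal_mul_star_apply, star_sum, ← Equiv.sum_comp σ]
  refine Finset.sum_congr rfl fun k _ => ?_
  rw [hU k i, hU k j, ha k]
  simp only [star_mul', star_star]
  linear_combination (star (U i (σ k)) * star (a (σ k)) * U j (σ k)) * (hcc k).symm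

theorem eq_of_forall_apply_eq_mul_star_apply (hU : U ∈ unitaryGroup ι ℂ) {k l : ι} {c : ℂ}
    (hc : c ≠ 0) (hk : ∀ n, star (U n k) = U n k) (h : ∀ n, U n k = c * star (U n l)) :
    l = k := by
  refine (eq_of_forall_apply_eq_mul_apply hU (star_ne_zero.mpr hc) fun n => ?_).symm
  rw [← hk, h, star_mul', star_star]

theorem map_star_mul_diagonal_mul_star_eq_self_of_perm_subtype {z : ι}
    (hz : ∀ n, star (U n z) = U n z) (ha : star (a z) = a z)
    (p : {k // k ≠ z} ≃ {k // k ≠ z}) (c : {k // k ≠ z} → ℂ) (hc : ∀ k, ‖c k‖ = 1)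
    (hpa : ∀ k : {k // k ≠ z}, a k = star (a (p k)))
    (hpU : ∀ k : {k // k ≠ z}, ∀ n, U n k = c k * star (U n (p k))) :
    (U * diagonal a * star U).map star = U * diagonal a * star U := by
  refine map_star_mul_diagonal_mul_star_eq_self_of_perm (Perm.ofSubtype p)
    (fun k => if hk : k = z then 1 else c ⟨k, hk⟩) (fun k => ?_) (fun k => ?_) (fun k n => ?_)
    <;> by_cases hk : k = z
  · simp [hk]
  · simp [hk, hc]
  · rw [hk, Perm.ofSubtype_apply_of_not_mem p (not_not.mpr rfl), ha]
  · rw [Perm.ofSubtype_apply_of_mem p hk]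
    exact hpa ⟨k, hk⟩
  · rw [hk, Perm.ofSubtype_apply_of_not_mem p (not_not.mpr rfl), dif_pos rfl, hz, one_mul]
  · rw [dif_neg hk, Perm.ofSubtype_apply_of_mem p hk]
    exact hpU ⟨k, hk⟩ n

end Matrix

/-- For unitary `U` with first column `(1/√N)·𝟏` and `a` with pairwise
distinct components, the atomic filter `H_a = U * diagonal a * U⁻¹` is a real matrix iff
there exist a bijection `p` of the index set `{2, …, N}` (here the nonzero indices of
`Fin N`) and unimodular constants `c_k` with `a_1 ∈ ℝ`, `a_k = conj (a_{p(k)})` and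
`u_k = c_k · conj (u_{p(k)})`. -/
theorem real_filter_iff (N : ℕ) (hN : 1 ≤ N)
    (U : Matrix (Fin N) (Fin N) ℂ) (hU : U ∈ Matrix.unitaryGroup (Fin N) ℂ)
    (hu1 : ∀ n, U n ⟨0, hN⟩ = (Real.sqrt N : ℂ)⁻¹)
    (a : Fin N → ℂ) (ha : Function.Injective a) :
    (∀ i j, ((U * Matrix.diagonal a * U⁻¹) i j).im = 0) ↔
      ∃ (p : {k : Fin N // k ≠ ⟨0, hN⟩} ≃ {k : Fin N // k ≠ ⟨0, hN⟩})
        (c : {k : Fin N // k ≠ ⟨0, hN⟩} → ℂ),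
        (∀ k, ‖c k‖ = 1) ∧
        (a ⟨0, hN⟩).im = 0 ∧
        (∀ k : {k : Fin N // k ≠ ⟨0, hN⟩}, a k.1 = star (a (p k).1)) ∧
        (∀ k : {k : Fin N // k ≠ ⟨0, hN⟩}, ∀ n, U n k.1 = c k * star (U n (p k).1)) := by
  set z : Fin N := ⟨0, hN⟩
  have hz : ∀ n, star (U n z) = U n z := fun n => by
    rw [hu1, ← Complex.ofReal_inv, Complex.star_def, Complex.conj_ofReal]
  have real_iff {x : ℂ} : x.im = 0 ↔ star x = x := Complex.conj_eq_iff_im.symm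
  rw [inv_eq_right_inv (mem_unitaryGroup_iff.mp hU), ← map_star_eq_self_iff, real_iff]
  constructor
  · intro h
    obtain ⟨σ, c, hc, hσa, hσU⟩ := exists_perm_of_map_star_mul_diagonal_mul_star_eq_self hU ha h
    have hσz : σ z = z :=
      eq_of_forall_apply_eq_mul_star_apply hU (norm_ne_zero_iff.mp (by simp [hc])) hz (hσU z)
    refine ⟨σ.subtypeEquiv fun k => (σ.injective.ne_iff' hσz).symm, fun k => c k,
      fun k => hc k, ?_, fun k => hσa k, fun k => hσU k⟩
    have ha0 := hσa z
    rw [hσz] at ha0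
    exact ha0.symm
  · rintro ⟨p, c, hc, ha0, hpa, hpU⟩
    exact map_star_mul_diagonal_mul_star_eq_self_of_perm_subtype hz ha0 p c hc hpa hpU
end

section
/- Let N ≥ 1 and let L ∈ ℝ^{N×N} be a real symmetric matrix whose eigenvalues are 0 = λ_1 < λ_2 ≤ … ≤ λ_N (so 0 is a simple eigenvalue) and whose eigenvector for eigenvalue 0 is (1/√N)·𝟏. Suppose there exist a unitary matrix U ∈ ℂ^{N×N} whose columns u_1, …, u_N are eigenvectors of L with u_1 = (1/√N)·𝟏, and a vector a ∈ ℂ^N with pairwise distinct components such that |a_k| = 1 for all k and U·diag(a)·U⁻¹ is a real matrix. Then at most one nonzero eigenvalue of L has odd multiplicity (i.e., all nonzero eigenvalues of L, except possibly one, have even multiplicity). -/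
/-!
Put `V = Uᴴ Ū`. Since `H = U diag(a) Uᴴ` and `L` are real, `diag(a) V = V diag(ā)` and
`diag(μ) V = V diag(μ̄) = V diag(μ)`. Every column `k` of the unitary `V` has a nonzero entry
`V (σ k) k`, which forces `a (σ k) = ā k` and `μ (σ k) = μ k`. As the `a k` are distinct, `σ` is
an involution preserving the fibres of `μ`, and its fixed points satisfy `a k = ±1`, so there are
at most two of them, one being the index of the constant eigenvector (eigenvalue `0`). A fibre of
odd size contains a fixed point of `σ`, so at most one nonzero eigenvalue has odd multiplicity.
-/

open Finset Module Matrix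

namespace Function.Involutive

variable {ι : Type*} {σ : ι → ι}

theorem exists_fixed_mem_of_odd_card (hσ : Involutive σ) {s : Finset ι}
    (hs : ∀ k ∈ s, σ k ∈ s) (hodd : Odd #s) : ∃ k ∈ s, σ k = k := by
  by_contra! hfree
  have hsum : ∑ _ ∈ s, (1 : ZMod 2) = 0 :=
    sum_involution (fun k _ => σ k) (fun _ _ => rfl) (fun k hk _ => hfree k hk) hs
      (fun k _ => hσ k)
  rw [sum_const, nsmul_one, ZMod.natCast_eq_zero_iff_even] at hsum
  exact Nat.not_odd_iff_even.mpr hsum hodd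

theorem subsingleton_odd_card_fiber [Fintype ι] [DecidableEq ι] {α : Type*} [DecidableEq α]
    (hσ : Involutive σ) {μ : ι → α} (hμ : ∀ k, μ (σ k) = μ k) {i₀ : ι} (hi₀ : σ i₀ = i₀)
    (hfix : #{k | σ k = k} ≤ 2) :
    {x | x ≠ μ i₀ ∧ Odd #{k | μ k = x}}.Subsingleton := by
  have fixed_mem_fiber : ∀ x, Odd #{k | μ k = x} → ∃ k, μ k = x ∧ σ k = k := fun x hx => by
    simpa using hσ.exists_fixed_mem_of_odd_card (fun k => by simp [hμ]) hx
  rintro x ⟨hx₀, hx⟩ y ⟨hy₀, hy⟩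
  by_contra hxy
  obtain ⟨k, rfl, hk⟩ := fixed_mem_fiber x hx
  obtain ⟨l, rfl, hl⟩ := fixed_mem_fiber y hy
  refine hfix.not_gt (two_lt_card.mpr ⟨i₀, ?_, k, ?_, l, ?_, ?_, ?_, ?_⟩) <;> grind

end Function.Involutive

theorem Complex.eq_one_or_eq_neg_one_of_conj_eq {z : ℂ} (hz : ‖z‖ = 1)
    (h : (starRingEnd ℂ) z = z) : z = 1 ∨ z = -1 := by
  obtain ⟨r, rfl⟩ := conj_eq_iff_real.mp h
  rw [norm_real, Real.norm_eq_abs] at hz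
  rcases abs_eq zero_le_one |>.mp hz with rfl | rfl <;> simp

theorem card_fixed_le_two_of_conj {ι : Type*} [Fintype ι] [DecidableEq ι] {σ : ι → ι}
    {a : ι → ℂ} (ha : Function.Injective a) (hmod : ∀ k, ‖a k‖ = 1)
    (hσ : ∀ k, a (σ k) = (starRingEnd ℂ) (a k)) : #{k | σ k = k} ≤ 2 := by
  refine (card_le_card_of_injOn a (t := {1, -1}) (fun k hk => ?_) ha.injOn).trans card_le_two
  have hk : σ k = k := by simpa using hk
  simpa using Complex.eq_one_or_eq_neg_one_of_conj_eq (hmod k) (hk ▸ hσ k).symm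

namespace Matrix

section Unitary

variable {n R : Type*} [CommRing R] [StarRing R]

theorem map_star_eq_star_map (U : Matrix n n R) :
    (star U).map (starRingEnd R) = star (U.map (starRingEnd R)) :=
  conjTranspose_map _ fun _ => rfl

variable [Fintype n] [DecidableEq n]

theorem col_ne_zero_of_mem_unitaryGroup [Nontrivial R] {U : Matrix n n R}
    (hU : U ∈ unitaryGroup n R) (k : n) : U.col k ≠ 0 := by
  intro hk
  have hzero (j) : U j k = 0 := congr_fun hk j
  have := congr_fun₂ (mem_unitaryGroup_iff'.mp hU) k k
  simp [mul_apply, hzero] at this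

def conjGram (U : Matrix n n R) : Matrix n n R := star U * U.map (starRingEnd R)

theorem conjGram_mem_unitaryGroup {U : Matrix n n R} (hU : U ∈ unitaryGroup n R) :
    conjGram U ∈ unitaryGroup n R :=
  mul_mem (Unitary.star_mem hU) (map_star_mem_unitaryGroup_iff.mpr hU)

theorem diagonal_mul_conjGram {U : Matrix n n R} (hU : U ∈ unitaryGroup n R) {d : n → R}
    (hreal : (U * diagonal d * star U).map (starRingEnd R) = U * diagonal d * star U) :
    diagonal d * conjGram U = conjGram U * diagonal (star d) := by
  have hU' : U.map (starRingEnd R) ∈ unitaryGroup n R := map_star_mem_unitaryGroup_iff.mpr hU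
  rw [Matrix.map_mul, Matrix.map_mul, map_star_eq_star_map, diagonal_map (map_zero _)] at hreal
  calc diagonal d * conjGram U
      = star U * (U * diagonal d * star U) * U.map (starRingEnd R) := by
        simp only [conjGram, ← Matrix.mul_assoc, mem_unitaryGroup_iff'.mp hU, Matrix.one_mul]
    _ = conjGram U * diagonal (star d) := by
        rw [← hreal]
        simp only [conjGram, Matrix.mul_assoc, mem_unitaryGroup_iff'.mp hU', Matrix.mul_one]
        rfl

theorem eq_star_of_conjGram_ne_zero [IsDomain R] {U : Matrix n n R} (hU : U ∈ unitaryGroup n R)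
    {d : n → R}
    (hreal : (U * diagonal d * star U).map (starRingEnd R) = U * diagonal d * star U)
    {j k : n} (h : conjGram U j k ≠ 0) : d j = star (d k) := by
  have := congr_fun₂ (diagonal_mul_conjGram hU hreal) j k
  rw [diagonal_mul, mul_diagonal, mul_comm (conjGram U j k)] at this
  exact mul_right_cancel₀ h this

theorem eq_of_conjGram_ne_zero_of_col_star_eq {U : Matrix n n R} (hU : U ∈ unitaryGroup n R)
    {k : n} (hk : ∀ i, star (U i k) = U i k) {j : n} (h : conjGram U j k ≠ 0) : j = k := by
  have hcol : conjGram U j k = (star U * U) j k := by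
    simp only [conjGram, mul_apply, map_apply, starRingEnd_apply, hk]
  rw [hcol, mem_unitaryGroup_iff'.mp hU] at h
  by_contra hjk
  exact h (one_apply_ne hjk)

theorem eq_mul_diagonal_mul_star_of_mul_eq {A U : Matrix n n R} (hU : U ∈ unitaryGroup n R)
    {μ : n → R} (h : A * U = U * diagonal μ) : A = U * diagonal μ * star U := by
  rw [← h, Matrix.mul_assoc, mem_unitaryGroup_iff.mp hU, Matrix.mul_one]

theorem star_eq_of_isHermitian_of_mul_eq {A U : Matrix n n R} (hA : A.IsHermitian)
    (hU : U ∈ unitaryGroup n R) {μ : n → R} (h : A * U = U * diagonal μ) (k : n) :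
    star (μ k) = μ k := by
  have hdiag : diagonal μ = Uᴴ * A * U := by
    rw [Matrix.mul_assoc, h, ← Matrix.mul_assoc, ← star_eq_conjTranspose,
      mem_unitaryGroup_iff'.mp hU, Matrix.one_mul]
  exact isHermitian_diagonal_iff.mp (hdiag ▸ isHermitian_conjTranspose_mul_mul U hA) k

end Unitary

variable {n R : Type*} [Fintype n] [DecidableEq n] [CommRing R]

theorem mulVec_col_of_mul_eq_mul_diagonal {A U : Matrix n n R} {μ : n → R}
    (h : A * U = U * diagonal μ) (k : n) : A *ᵥ U.col k = μ k • U.col k := by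
  ext i
  have := congr_fun₂ h i k
  rw [mul_apply, mul_diagonal] at this
  simpa [mulVec, dotProduct, mul_comm] using this

theorem eq_zero_of_mul_eq_mul_diagonal_of_col_eq_const [IsDomain R] {A U : Matrix n n R}
    {μ : n → R} (h : A * U = U * diagonal μ) (hA : A *ᵥ (fun _ => 1) = 0) {k : n} {c : R}
    (hc : c ≠ 0) (hk : ∀ i, U i k = c) : μ k = 0 := by
  have hcol : U.col k = c • fun _ => 1 := by ext i; simp [hk]
  have := congr_fun (mulVec_col_of_mul_eq_mul_diagonal h k) k
  rw [hcol, mulVec_smul, hA] at this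
  simpa [hc] using this.symm

theorem finrank_eigenspace_toLin'_eq_card {K : Type*} [Field K] [DecidableEq K]
    {A U : Matrix n n K} {μ : n → K} (hU : IsUnit U.det) (h : A * U = U * diagonal μ) (c : K) :
    finrank K (End.eigenspace (toLin' A) c) = #{k | μ k = c} := by
  have hshift : (A - c • 1) * U = U * diagonal (fun k => μ k - c) := by
    rw [sub_mul, h, smul_mul, Matrix.one_mul, ← diagonal_sub, Matrix.mul_sub,
      ← smul_one_eq_diagonal, Matrix.mul_smul, Matrix.mul_one]
  have hrank : (A - c • 1).rank = #{k | μ k ≠ c} := by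
    rw [← rank_mul_eq_left_of_isUnit_det U _ hU, hshift, rank_mul_eq_right_of_isUnit_det U _ hU,
      rank_diagonal, Fintype.card_subtype]
    simp only [sub_ne_zero]
  have hnullity := LinearMap.finrank_range_add_finrank_ker (toLin' (A - c • 1))
  rw [toLin'_apply', ← rank, hrank, finrank_fintype_fun_eq_card] at hnullity
  have hsplit : #{k | μ k = c} + #{k | μ k ≠ c} = Fintype.card n :=
    card_filter_add_card_filter_not _
  rw [End.eigenspace_def, End.one_eq_id, ← toLin'_one, ← map_smul, ← map_sub, toLin'_apply']
  omega

end Matrix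

theorem normal_atomic_filter_implies_multiplicity_general (N : ℕ) (hN : 1 ≤ N)
    (L : Matrix (Fin N) (Fin N) ℝ) (hSym : L.IsSymm)
    (hone : L.mulVec (fun _ => (1 : ℝ)) = 0)
    (U : Matrix (Fin N) (Fin N) ℂ) (hU : U ∈ Matrix.unitaryGroup (Fin N) ℂ)
    (μ : Fin N → ℂ)
    (hcols : L.map Complex.ofReal * U = U * Matrix.diagonal μ)
    (hu1 : ∀ n, U n ⟨0, hN⟩ = (Real.sqrt N : ℂ)⁻¹)
    (a : Fin N → ℂ) (ha : Function.Injective a)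
    (hmod : ∀ k, ‖a k‖ = 1)
    (hreal : ∀ i j, ((U * Matrix.diagonal a * U⁻¹) i j).im = 0) :
    {lam : ℂ | lam ≠ 0 ∧
      Odd (Module.finrank ℂ
        (Module.End.eigenspace (Matrix.toLin' (L.map Complex.ofReal)) lam))}.Subsingleton := by
  classical
  set i₀ : Fin N := ⟨0, hN⟩
  have hL_real : (U * diagonal μ * star U).map (starRingEnd ℂ) = U * diagonal μ * star U := by
    rw [← eq_mul_diagonal_mul_star_of_mul_eq hU hcols]
    ext; simp
  have hH_real : (U * diagonal a * star U).map (starRingEnd ℂ) = U * diagonal a * star U := by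
    rw [← inv_eq_left_inv (mem_unitaryGroup_iff'.mp hU)]
    ext i j
    exact Complex.conj_eq_iff_im.mpr (hreal i j)
  have hμ_real := star_eq_of_isHermitian_of_mul_eq
    (IsHermitian.ext fun i j => by simp [hSym.apply]) hU hcols
  choose σ hσ using fun k =>
    Function.ne_iff.mp (col_ne_zero_of_mem_unitaryGroup (conjGram_mem_unitaryGroup hU) k)
  have hσa (k) : a (σ k) = starRingEnd ℂ (a k) := eq_star_of_conjGram_ne_zero hU hH_real (hσ k)
  have hσμ (k) : μ (σ k) = μ k := (eq_star_of_conjGram_ne_zero hU hL_real (hσ k)).trans (hμ_real k)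
  have hσ_inv : Function.Involutive σ := fun k => ha (by rw [hσa, hσa, Complex.conj_conj])
  have hσi₀ : σ i₀ = i₀ := eq_of_conjGram_ne_zero_of_col_star_eq hU (by simp [hu1]) (hσ i₀)
  have hone_ℂ : L.map Complex.ofReal *ᵥ (fun _ => 1) = 0 := by
    ext i
    exact (RingHom.map_mulVec Complex.ofRealHom L (fun _ => 1) i).symm.trans (by simp [hone])
  have hμi₀ : μ i₀ = 0 :=
    eq_zero_of_mul_eq_mul_diagonal_of_col_eq_const hcols hone_ℂ
      (inv_ne_zero (Complex.ofReal_ne_zero.mpr (Real.sqrt_ne_zero'.mpr (Nat.cast_pos.mpr hN)))) hu1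
  simp_rw [finrank_eigenspace_toLin'_eq_card (isUnit_det_of_left_inverse hU.1) hcols, ← hμi₀]
  exact hσ_inv.subsingleton_odd_card_fiber hσμ hσi₀ (card_fixed_le_two_of_conj ha hmod hσa)

/-- Let `L` be real symmetric, positive semidefinite, with `0` a simple
eigenvalue whose eigenvector is `(1/√N)·𝟏`. If there exist a unitary `U` whose columns
are eigenvectors of `L` with first column `(1/√N)·𝟏`, and a vector `a` with pairwise
distinct unimodular components such that `U * diagonal a * U⁻¹` is a real matrix
(i.e., a normal atomic filter exists), then at most one nonzero eigenvalue of `L`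
has odd multiplicity. -/
theorem normal_atomic_filter_implies_multiplicity (N : ℕ) (hN : 1 ≤ N)
    (L : Matrix (Fin N) (Fin N) ℝ) (hSym : L.IsSymm) (hPSD : L.PosSemidef)
    (hone : L.mulVec (fun _ => (1 : ℝ)) = 0)
    (h0simple :
      Module.finrank ℂ
        (Module.End.eigenspace (Matrix.toLin' (L.map Complex.ofReal)) 0) = 1)
    (U : Matrix (Fin N) (Fin N) ℂ) (hU : U ∈ Matrix.unitaryGroup (Fin N) ℂ)
    (μ : Fin N → ℂ)
    (hcols : L.map Complex.ofReal * U = U * Matrix.diagonal μ)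
    (hu1 : ∀ n, U n ⟨0, hN⟩ = (Real.sqrt N : ℂ)⁻¹)
    (a : Fin N → ℂ) (ha : Function.Injective a)
    (hmod : ∀ k, ‖a k‖ = 1)
    (hreal : ∀ i j, ((U * Matrix.diagonal a * U⁻¹) i j).im = 0) :
    {lam : ℂ | lam ≠ 0 ∧
      Odd (Module.finrank ℂ
        (Module.End.eigenspace (Matrix.toLin' (L.map Complex.ofReal)) lam))}.Subsingleton :=
  normal_atomic_filter_implies_multiplicity_general N hN L hSym hone U hU μ hcols hu1 a ha hmod
    hreal
end

section
/- Let N ≥ 1 and let L ∈ ℝ^{N×N} be a real symmetric matrix whose eigenvalues are 0 = λ_1 < λ_2 ≤ … ≤ λ_N (so 0 is a simple eigenvalue) and whose eigenvector for eigenvalue 0 is (1/√N)·𝟏. If at most one nonzero eigenvalue of L has odd multiplicity, then there exists a unitary matrix U ∈ ℂ^{N×N} whose columns u_1, …, u_N form an orthonormal family of eigenvectors of L satisfying u_1 = (1/√N)·𝟏 and u_k = conj(u_{N+2−k}) for k = 2, …, ⌊N/2⌋+1 (where conj denotes entrywise complex conjugation and ⌊N/2⌋ is the largest integer not exceeding N/2).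 -/
/-!
Diagonalize `L` by a real orthogonal matrix and reorder its columns so that the eigenvalues `ν`
satisfy `ν 0 = 0` and `ν (-k) = ν k`, with indices negated in `Fin N`. This is possible because,
once the simple eigenvalue `0` is removed, at most one eigenvalue has odd multiplicity, so the
remaining eigenvalues can be laid out as a palindrome. Since the kernel is the line through `𝟏`,
the first column can be taken to be `𝟏/√N`.

Then multiply on the right by `B = ((1 + i)/2) • 1 + ((1 - i)/2) • P`, where `P` is the
permutation matrix of `k ↦ -k`. Writing `B = Π₊ + i Π₋` with `Π± = (1 ± P)/2` shows that `B`
is unitary. It commutes with `diagonal ν`, leaves column `0` alone, and its columns `k` and `-k`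
are complex conjugates. So for real `W` the columns `k` and `-k` of `W * B` are complex
conjugates too.
-/

open Matrix Module End Complex

theorem Multiset.count_map_univ_val {ι α : Type*} [Fintype ι] [DecidableEq α] (f : ι → α)
    (a : α) : (Finset.univ.val.map f).count a = Fintype.card {i // f i = a} := by
  simp only [count_map, Fintype.card_subtype, Finset.card, Finset.filter_val, eq_comm]

theorem Multiset.exists_palindrome_coe_eq {α : Type*} [DecidableEq α] (s : Multiset α)
    (hs : {a | Odd (s.count a)}.Subsingleton) :
    ∃ l : List α, l.Palindrome ∧ (l : Multiset α) = s := by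
  set half : Multiset α := ∑ a ∈ s.toFinset, replicate (s.count a / 2) a
  set odd : Finset α := s.toFinset.filter fun a => Odd (s.count a)
  have hhalf (a : α) : half.count a = s.count a / 2 := by
    rw [count_sum', Finset.sum_eq_single a]
    · simp
    · intro b _ hb
      simp [count_replicate, hb]
    · intro ha
      simp [count_eq_zero.mpr (mem_toFinset.not.mp ha)]
  have hodd (a : α) : odd.val.count a = if Odd (s.count a) then 1 else 0 := by
    by_cases h : Odd (s.count a)
    · simp [odd, h, count_pos.mp h.pos]
    · simp [odd, h]
  have hodd_rev : odd.toList.reverse = odd.toList := by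
    have hlen : odd.toList.length ≤ 1 := by
      rw [Finset.length_toList, Finset.card_le_one]
      exact fun a ha b hb => hs (Finset.mem_filter.mp ha).2 (Finset.mem_filter.mp hb).2
    generalize odd.toList = l at hlen
    rcases l with _ | ⟨x, _ | ⟨y, t⟩⟩ <;> simp at hlen ⊢
  refine ⟨half.toList ++ odd.toList ++ half.toList.reverse,
    .of_reverse_eq (by simp [hodd_rev]), ?_⟩
  ext a
  simp only [← coe_add, coe_reverse, coe_toList, Finset.coe_toList, count_add, hhalf, hodd]
  split_ifs with h
  · have := Nat.odd_iff.mp h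
    omega
  · have := Nat.not_odd_iff.mp h
    omega

theorem List.Palindrome.getElem_rev {α : Type*} {l : List α} (hl : l.Palindrome)
    (j : Fin l.length) : l[j.rev] = l[j] :=
  calc l[j.rev] = l.reverse[j.1]'(by simp) := by
        simp only [List.getElem_reverse, Fin.getElem_fin, Fin.val_rev]
        congr 1
        omega
    _ = l[j] := List.getElem_of_eq hl.reverse_eq _

theorem Equiv.Perm.exists_comp_eq_of_map_univ_eq {ι α : Type*} [Fintype ι] [DecidableEq α]
    {f g : ι → α} (h : Finset.univ.val.map f = Finset.univ.val.map g) :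
    ∃ σ : Equiv.Perm ι, f ∘ σ = g := by
  have hcard (a : α) : Fintype.card {i // g i = a} = Fintype.card {i // f i = a} := by
    rw [← Multiset.count_map_univ_val, ← Multiset.count_map_univ_val, h]
  exact ⟨Equiv.ofFiberEquiv fun a => Fintype.equivOfCardEq (hcard a),
    funext (Equiv.ofFiberEquiv_map _)⟩

theorem Fin.cons_neg {α : Type*} {n : ℕ} (a : α) (p : Fin n → α) (hp : ∀ j, p j.rev = p j)
    (k : Fin (n + 1)) :
    (Fin.cons a p : Fin (n + 1) → α) (-k) = (Fin.cons a p : Fin (n + 1) → α) k := by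
  induction k using Fin.cases with
  | zero => rw [neg_zero]
  | succ j =>
    have : -j.succ = j.rev.succ := by
      rw [neg_eq_iff_add_eq_zero]
      ext
      simp only [Fin.val_add, Fin.val_succ, Fin.val_rev, Fin.val_zero]
      rw [show (j : ℕ) + 1 + (n - (j + 1) + 1) = n + 1 by omega, Nat.mod_self]
    rw [this, Fin.cons_succ, Fin.cons_succ, hp]

theorem Fin.exists_perm_apply_neg_eq {α : Type*} [DecidableEq α] {n : ℕ} (f : Fin (n + 1) → α)
    {a : α} (ha : Fintype.card {i // f i = a} = 1)
    (hodd : {b | b ≠ a ∧ Odd (Fintype.card {i // f i = b})}.Subsingleton) :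
    ∃ σ : Equiv.Perm (Fin (n + 1)), f (σ 0) = a ∧ ∀ k, f (σ (-k)) = f (σ k) := by
  set s := Finset.univ.val.map f
  have has : a ∈ s :=
    Multiset.count_pos.mp (by rw [Multiset.count_map_univ_val, ha]; exact Nat.one_pos)
  have hodd' : {b | Odd ((s.erase a).count b)}.Subsingleton := by
    refine hodd.anti fun b hb => ?_
    rcases eq_or_ne b a with rfl | hba
    · rw [Set.mem_ofPred_eq, Multiset.count_erase_self, Multiset.count_map_univ_val, ha] at hb
      simp at hb
    · rw [Set.mem_ofPred_eq, Multiset.count_erase_of_ne hba, Multiset.count_map_univ_val] at hb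
      exact ⟨hba, hb⟩
  obtain ⟨P, hP, hPs⟩ := (s.erase a).exists_palindrome_coe_eq hodd'
  have hlen : P.length = n := by
    have := congrArg Multiset.card hPs
    simp only [Multiset.coe_card, Multiset.card_erase_of_mem has, s, Multiset.card_map,
      Finset.card_val, Finset.card_univ, Fintype.card_fin] at this
    simpa using this
  subst hlen
  have hg : Finset.univ.val.map (Fin.cons a fun j => P[j] : Fin (P.length + 1) → α) = s := by
    rw [Fin.univ_val_map, List.ofFn_cons, show List.ofFn (P[·]) = P from List.ofFn_getElem,
      ← Multiset.cons_coe, hPs, Multiset.cons_erase has]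
  obtain ⟨σ, hσ⟩ := Equiv.Perm.exists_comp_eq_of_map_univ_eq hg.symm
  refine ⟨σ, congr_fun hσ 0, fun k => ?_⟩
  simp only [← Function.comp_apply (f := f), hσ]
  exact Fin.cons_neg _ _ hP.getElem_rev k

theorem smul_one_add_smul_mem_unitary {A : Type*} [Ring A] [StarRing A] [Algebra ℂ A]
    [StarModule ℂ A] {R : A} (hR : IsSelfAdjoint R) (hRR : R * R = 1) :
    ((1 + I) / 2 : ℂ) • (1 : A) + ((1 - I) / 2 : ℂ) • R ∈ unitary A := by
  have hc : star ((1 + I) / 2 : ℂ) = (1 - I) / 2 := by simp [sub_eq_add_neg]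
  have hc' : star ((1 - I) / 2 : ℂ) = (1 + I) / 2 := by simp
  rw [Unitary.mem_iff]
  simp only [star_add, star_smul, star_one, hR.star_eq, hc, hc', add_mul, mul_add, smul_mul_smul,
    one_mul, mul_one, hRR]
  constructor <;> match_scalars <;>
    first | linear_combination (1 / 2 : ℂ) * I_sq | linear_combination (-1 / 2 : ℂ) * I_sq

namespace Matrix

section Eigenbasis

variable {n R : Type*} [Fintype n] [DecidableEq n]

def IsUnitaryEigenbasis [CommRing R] [StarRing R] (M W : Matrix n n R) (ν : n → R) : Prop :=
  W ∈ unitaryGroup n R ∧ M * W = W * diagonal ν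

theorem IsHermitian.isUnitaryEigenbasis {𝕜 : Type*} [RCLike 𝕜] {A : Matrix n n 𝕜}
    (hA : A.IsHermitian) :
    IsUnitaryEigenbasis A hA.eigenvectorUnitary (RCLike.ofReal ∘ hA.eigenvalues) := by
  refine ⟨hA.eigenvectorUnitary.2, ?_⟩
  have hD := hA.conjStarAlgAut_star_eigenvectorUnitary
  rw [Unitary.conjStarAlgAut_star_apply] at hD
  rw [← hD, ← mul_assoc, ← mul_assoc, Unitary.mul_star_self_of_mem hA.eigenvectorUnitary.2,
    one_mul]

namespace IsUnitaryEigenbasis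

section CommRing

variable [CommRing R] [StarRing R] {M W : Matrix n n R} {ν : n → R}

theorem mul {B : Matrix n n R} (h : IsUnitaryEigenbasis M W ν) (hB : B ∈ unitaryGroup n R)
    (hνB : Commute (diagonal ν) B) : IsUnitaryEigenbasis M (W * B) ν :=
  ⟨mul_mem h.1 hB, by rw [← mul_assoc, h.2, mul_assoc, hνB.eq, mul_assoc]⟩

theorem submatrix (h : IsUnitaryEigenbasis M W ν) (σ : n ≃ n) :
    IsUnitaryEigenbasis M (W.submatrix id σ) (ν ∘ σ) := by
  refine ⟨?_, ?_⟩
  · rw [mem_unitaryGroup_iff', star_eq_conjTranspose, conjTranspose_submatrix,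
      ← submatrix_mul _ _ _ _ _ Function.bijective_id, ← star_eq_conjTranspose,
      mem_unitaryGroup_iff'.mp h.1, submatrix_one_equiv]
  · rw [← submatrix_diagonal_equiv, submatrix_mul_equiv, ← h.2, ← submatrix_id_id M,
      ← submatrix_mul _ _ _ _ _ Function.bijective_id, submatrix_id_id]

theorem map {S : Type*} [CommRing S] [StarRing S] (h : IsUnitaryEigenbasis M W ν) (f : R →+* S)
    (hf : ∀ x, f (star x) = star (f x)) :
    IsUnitaryEigenbasis (M.map f) (W.map f) (f ∘ ν) := by
  refine ⟨?_, ?_⟩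
  · rw [mem_unitaryGroup_iff', star_eq_conjTranspose, ← conjTranspose_map f hf, ← Matrix.map_mul,
      ← star_eq_conjTranspose, mem_unitaryGroup_iff'.mp h.1,
      Matrix.map_one f (map_zero f) (map_one f)]
  · rw [← Matrix.map_mul, h.2, Matrix.map_mul, diagonal_map (map_zero f)]
    rfl

theorem map_ofReal {M W : Matrix n n ℝ} {ν : n → ℝ} (h : IsUnitaryEigenbasis M W ν) :
    IsUnitaryEigenbasis (M.map ofReal) (W.map ofReal) (fun i => (ν i : ℂ)) :=
  h.map ofRealHom fun _ => (conj_ofReal _).symm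

theorem mulVec_col (h : IsUnitaryEigenbasis M W ν) (k : n) :
    M *ᵥ (fun i => W i k) = ν k • fun i => W i k := by
  ext i
  have hik := congr_fun₂ h.2 i k
  rw [mul_apply, mul_diagonal] at hik
  simpa [mulVec, dotProduct, mul_comm] using hik

end CommRing

theorem finrank_eigenspace [Field R] [StarRing R] [DecidableEq R] {M W : Matrix n n R}
    {ν : n → R} (h : IsUnitaryEigenbasis M W ν) (μ : R) :
    finrank R (eigenspace (toLin' M) μ) = Fintype.card {i // ν i = μ} := by
  have hW : IsUnit W.det := isUnit_det_of_left_inverse (mem_unitaryGroup_iff'.mp h.1)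
  have hshift : (M - μ • 1) * W = W * diagonal (fun i => ν i - μ) := by
    have hdiag : diagonal (fun i => ν i - μ) = diagonal ν - μ • 1 := by
      rw [smul_one_eq_diagonal, diagonal_sub]
    rw [hdiag, sub_mul, mul_sub, h.2, smul_mul, one_mul, Matrix.mul_smul, mul_one]
  have hrank : (M - μ • 1).rank = Fintype.card {i // ν i - μ ≠ 0} := by
    rw [← rank_mul_eq_left_of_isUnit_det W _ hW, hshift, rank_mul_eq_right_of_isUnit_det _ _ hW,
      rank_diagonal]
  have hker := LinearMap.finrank_range_add_finrank_ker (toLin' (M - μ • 1))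
  rw [toLin'_apply', ← Matrix.rank, hrank] at hker
  rw [← toLin'_apply', map_sub, map_smul, toLin'_one, ← Module.End.one_eq_id,
    ← eigenspace_def] at hker
  have hcompl : Fintype.card {i // ν i - μ ≠ 0} =
      Fintype.card n - Fintype.card {i // ν i = μ} := by
    simp_rw [sub_ne_zero]
    exact Fintype.card_subtype_compl _
  have := Fintype.card_subtype_le (fun i => ν i = μ)
  simp only [Module.finrank_fintype_fun_eq_card] at hker
  omega

theorem finrank_eigenspace_map_ofReal {M W : Matrix n n ℝ} {ν : n → ℝ}
    (h : IsUnitaryEigenbasis M W ν) (b : ℝ) :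
    finrank ℂ (eigenspace (toLin' (M.map ofReal)) b) = finrank ℝ (eigenspace (toLin' M) b) := by
  rw [h.map_ofReal.finrank_eigenspace, h.finrank_eigenspace]
  exact Fintype.card_congr (Equiv.subtypeEquivRight fun i => ofReal_inj)

theorem exists_col_eq {M W : Matrix n n ℝ} {ν : n → ℝ} (h : IsUnitaryEigenbasis M W ν) {k : n}
    {v : n → ℝ} (hv : v ∈ eigenspace (toLin' M) (ν k))
    (hk : finrank ℝ (eigenspace (toLin' M) (ν k)) = 1) (hv1 : v ⬝ᵥ v = 1) :
    ∃ W', IsUnitaryEigenbasis M W' ν ∧ ∀ i, W' i k = v i := by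
  set w : n → ℝ := fun i => W i k
  have hw : w ∈ eigenspace (toLin' M) (ν k) := by
    rw [mem_eigenspace_iff, toLin'_apply, h.mulVec_col]
  have hw1 : w ⬝ᵥ w = 1 := by
    simpa [mul_apply, dotProduct] using congr_fun₂ (mem_unitaryGroup_iff'.mp h.1) k k
  have hw0 : (⟨w, hw⟩ : eigenspace (toLin' M) (ν k)) ≠ 0 := by
    intro h0
    rw [Subtype.ext_iff] at h0
    simp [show w = 0 from h0] at hw1
  obtain ⟨c, hc⟩ := (finrank_eq_one_iff_of_nonzero' _ hw0).mp hk ⟨v, hv⟩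
  rw [Subtype.ext_iff] at hc
  simp only [SetLike.val_smul] at hc
  have hcc : c * c = 1 := by
    rw [← hv1, ← hc, smul_dotProduct, dotProduct_smul, hw1]
    simp
  refine ⟨W * diagonal (Pi.mulSingle k c), h.mul ?_ (commute_diagonal _ _), fun i => ?_⟩
  · rw [mem_unitaryGroup_iff', star_eq_conjTranspose, diagonal_conjTranspose,
      diagonal_mul_diagonal, ← diagonal_one]
    congr 1
    ext i
    rcases eq_or_ne i k with rfl | hik
    · simpa using hcc
    · simp [hik]
  · rw [mul_diagonal, Pi.mulSingle_eq_same, ← hc]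
    simp [w, mul_comm]

end IsUnitaryEigenbasis

end Eigenbasis

theorem IsHermitian.exists_isUnitaryEigenbasis_neg_invariant {n : ℕ}
    {L : Matrix (Fin (n + 1)) (Fin (n + 1)) ℝ} (hL : L.IsHermitian) (hone : L *ᵥ (fun _ => 1) = 0)
    (h0 : finrank ℝ (eigenspace (toLin' L) 0) = 1)
    (hodd : {b : ℝ | b ≠ 0 ∧ Odd (finrank ℝ (eigenspace (toLin' L) b))}.Subsingleton) :
    ∃ W ν, IsUnitaryEigenbasis L W ν ∧ (∀ i, W i 0 = (Real.sqrt (n + 1 : ℕ))⁻¹) ∧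
      ∀ k, ν (-k) = ν k := by
  obtain ⟨V, μ, hV⟩ : ∃ V μ, IsUnitaryEigenbasis L V μ := ⟨_, _, hL.isUnitaryEigenbasis⟩
  simp only [hV.finrank_eigenspace] at h0 hodd
  obtain ⟨σ, hσ0, hσneg⟩ := Fin.exists_perm_apply_neg_eq μ h0 hodd
  set v : Fin (n + 1) → ℝ := fun _ => (Real.sqrt (n + 1 : ℕ))⁻¹
  have hv : v ∈ eigenspace (toLin' L) ((μ ∘ σ) 0) := by
    rw [Function.comp_apply, hσ0, mem_eigenspace_iff, toLin'_apply, zero_smul,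
      show v = (Real.sqrt (n + 1 : ℕ))⁻¹ • fun _ => 1 by ext; simp [v], mulVec_smul, hone,
      smul_zero]
  have hv1 : v ⬝ᵥ v = 1 := by
    simp only [v, dotProduct, Finset.sum_const, Finset.card_univ, Fintype.card_fin, nsmul_eq_mul]
    rw [← mul_inv, Real.mul_self_sqrt (by positivity), mul_inv_cancel₀ (by positivity)]
  obtain ⟨W, hW, hW0⟩ := (hV.submatrix σ).exists_col_eq hv
    (by rw [Function.comp_apply, hσ0, hV.finrank_eigenspace, h0]) hv1
  exact ⟨W, μ ∘ σ, hW, hW0, hσneg⟩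

section Pairing

variable {n : Type*} [DecidableEq n]

noncomputable def pairingMatrix (τ : Equiv.Perm n) : Matrix n n ℂ :=
  ((1 + I) / 2 : ℂ) • 1 + ((1 - I) / 2 : ℂ) • τ.permMatrix ℂ

variable {τ : Equiv.Perm n}

theorem star_pairingMatrix_apply (hτ : Function.Involutive τ) (i j : n) :
    star (pairingMatrix τ i j) = pairingMatrix τ i (τ j) := by
  simp only [pairingMatrix, add_apply, smul_apply, one_apply, PEquiv.toMatrix_apply,
    Equiv.toPEquiv_apply, Option.mem_def, Option.some_inj, smul_eq_mul, τ.injective.eq_iff,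
    ← hτ.eq_iff]
  split_ifs <;> simp [sub_eq_add_neg, add_comm]

variable [Fintype n]

theorem pairingMatrix_mem_unitaryGroup (hτ : Function.Involutive τ) :
    pairingMatrix τ ∈ unitaryGroup n ℂ := by
  have hττ : τ * τ = 1 := Equiv.ext hτ
  refine smul_one_add_smul_mem_unitary ?_ ?_
  · rw [IsSelfAdjoint, star_eq_conjTranspose, conjTranspose_permMatrix,
      inv_eq_of_mul_eq_one_right hττ]
  · rw [← permMatrix_mul, hττ, permMatrix_one]

theorem commute_diagonal_pairingMatrix {ν : n → ℂ} (hν : ∀ i, ν (τ i) = ν i) :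
    Commute (diagonal ν) (pairingMatrix τ) := by
  refine ((Commute.one_right _).smul_right _).add_right (Commute.smul_right ?_ _)
  ext i j
  simp only [diagonal_mul, mul_diagonal, PEquiv.toMatrix_apply, Equiv.toPEquiv_apply,
    Option.mem_def, Option.some_inj]
  split_ifs with h
  · rw [← h, hν, mul_comm]
  · simp

theorem mul_pairingMatrix_apply_of_isFixedPt (M : Matrix n n ℂ) {k : n} (hk : τ k = k) (i : n) :
    (M * pairingMatrix τ) i k = M i k := by
  rw [pairingMatrix, Matrix.mul_add, Matrix.mul_smul, Matrix.mul_smul, mul_one,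
    Equiv.Perm.permMatrix, PEquiv.mul_toMatrix_toPEquiv]
  simp only [add_apply, smul_apply, submatrix_apply, id, τ.symm_apply_eq.mpr hk.symm, smul_eq_mul]
  ring

theorem star_map_ofReal_mul_pairingMatrix_apply (hτ : Function.Involutive τ) (W : Matrix n n ℝ)
    (i j : n) :
    star ((W.map ofReal * pairingMatrix τ) i j) = (W.map ofReal * pairingMatrix τ) i (τ j) := by
  simp only [mul_apply, star_sum, star_mul', map_apply, star_pairingMatrix_apply hτ]
  exact Finset.sum_congr rfl fun x _ => congrArg (· * _) (conj_ofReal _)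

end Pairing

end Matrix

/-- Let `L` be real symmetric, positive semidefinite, with `0` a simple
eigenvalue whose eigenvector is `(1/√N)·𝟏`. If at most one nonzero eigenvalue of `L` has
odd multiplicity, then there exists a unitary matrix `U` whose columns are (orthonormal)
eigenvectors of `L` with first column `(1/√N)·𝟏` and `u_k = conj (u_{N+2-k})` for
`k = 2, …, ⌊N/2⌋+1` (with 1-based indexing; below indices are 0-based). -/
theorem exists_symmetric_eigenbasis (N : ℕ) (hN : 1 ≤ N)
    (L : Matrix (Fin N) (Fin N) ℝ) (hSym : L.IsSymm)
    (hone : L.mulVec (fun _ => (1 : ℝ)) = 0)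
    (h0simple :
      Module.finrank ℂ
        (Module.End.eigenspace (Matrix.toLin' (L.map Complex.ofReal)) 0) = 1)
    (hodd : {lam : ℂ | lam ≠ 0 ∧
      Odd (Module.finrank ℂ
        (Module.End.eigenspace (Matrix.toLin' (L.map Complex.ofReal)) lam))}.Subsingleton) :
    ∃ U : Matrix (Fin N) (Fin N) ℂ, U ∈ Matrix.unitaryGroup (Fin N) ℂ ∧
      (∃ μ : Fin N → ℂ, L.map Complex.ofReal * U = U * Matrix.diagonal μ) ∧
      (∀ n, U n ⟨0, hN⟩ = (Real.sqrt N : ℂ)⁻¹) ∧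
      (∀ (k : Fin N) (hk1 : 1 ≤ (k : ℕ)) (hk2 : (k : ℕ) ≤ N / 2),
        ∀ n, U n k = star (U n ⟨N - (k : ℕ), by omega⟩)) := by
  obtain ⟨n, rfl⟩ : ∃ n, N = n + 1 := ⟨N - 1, by omega⟩
  have hL : L.IsHermitian := isHermitian_iff_isSymm.mpr hSym
  have hfinrank := hL.isUnitaryEigenbasis.finrank_eigenspace_map_ofReal
  obtain ⟨W, ν, hW, hW0, hν⟩ := hL.exists_isUnitaryEigenbasis_neg_invariant hone
    (by rw [← hfinrank, ofReal_zero, h0simple]) fun b hb c hc => by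
      rw [Set.mem_ofPred_eq, ← hfinrank] at hb hc
      exact_mod_cast hodd ⟨ofReal_ne_zero.mpr hb.1, hb.2⟩ ⟨ofReal_ne_zero.mpr hc.1, hc.2⟩
  have hτ : Function.Involutive (Equiv.neg (Fin (n + 1))) := neg_neg
  have hU := hW.map_ofReal.mul (pairingMatrix_mem_unitaryGroup hτ)
    (commute_diagonal_pairingMatrix fun k => by simp [hν])
  refine ⟨_, hU.1, ⟨_, hU.2⟩, fun i => ?_, fun k hk _ i => ?_⟩
  · rw [mul_pairingMatrix_apply_of_isFixedPt _ neg_zero]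
    simp [hW0]
  · have hk' : (⟨n + 1 - k, by omega⟩ : Fin (n + 1)) = -k := by
      ext
      rw [Fin.val_neg', Nat.mod_eq_of_lt (by omega)]
    rw [hk', ← Equiv.neg_apply, star_map_ofReal_mul_pairingMatrix_apply hτ, hτ k]
end

section
/- Let N ≥ 1 and let U ∈ ℂ^{N×N} be unitary with columns u_1, …, u_N satisfying u_1 = (1/√N)·𝟏 and u_k = conj(u_{N+2−k}) for k = 2, …, ⌊N/2⌋+1. Then there exists a vector a ∈ ℂ^N with pairwise distinct components such that |a_k| = 1 for all k and U·diag(a)·U⁻¹ is a real matrix; that is, a normal atomic filter exists. -/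
/-!
The column symmetry says that complex conjugation permutes the columns of `U` by `k ↦ -k`
in `ℤ/N`. Take for `a` the `N`-th roots of unity `a_k = exp (2πik/N)`: they are distinct,
unimodular and satisfy `conj a_k = a_{-k}`. Conjugating the entry
`∑ₖ U_ik a_k conj U_jk` of `U diag(a) Uᴴ` then only reindexes the sum along `k ↦ -k`,
so the entry is real.
-/

open Matrix

section
variable {ι R : Type*} [Fintype ι] [DecidableEq ι] [CommSemiring R] [StarRing R]

theorem Matrix.mul_diagonal_mul_conjTranspose_apply (U : Matrix ι ι R) (a : ι → R) (i j : ι) :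
    (U * diagonal a * Uᴴ) i j = ∑ k, U i k * a k * star (U j k) := by
  simp only [mul_apply (M := U * diagonal a), mul_diagonal, conjTranspose_apply]

theorem Matrix.star_mul_diagonal_mul_conjTranspose_apply_of_perm {U : Matrix ι ι R} {a : ι → R}
    (σ : Equiv.Perm ι) (hU : ∀ i k, star (U i k) = U i (σ k)) (ha : ∀ k, star (a k) = a (σ k))
    (i j : ι) : star ((U * diagonal a * Uᴴ) i j) = (U * diagonal a * Uᴴ) i j := by
  rw [mul_diagonal_mul_conjTranspose_apply, star_sum]
  conv_rhs => rw [← Equiv.sum_comp σ]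
  refine Finset.sum_congr rfl fun k _ => ?_
  rw [star_mul', star_mul', star_star, hU i k, ha k, ← hU j k, star_star]

end

theorem Fin.star_apply_eq_apply_neg_of_le_half {R : Type*} [InvolutiveStar R] {N : ℕ} [NeZero N]
    (f : Fin N → R) (h0 : star (f 0) = f 0)
    (hf : ∀ k : Fin N, 1 ≤ (k : ℕ) → (k : ℕ) ≤ N / 2 → star (f (-k)) = f k) (k : Fin N) :
    star (f k) = f (-k) := by
  by_cases hk0 : k = 0
  · rw [hk0, neg_zero, h0]
  have hk1 : 1 ≤ (k : ℕ) := Nat.one_le_iff_ne_zero.mpr (Fin.val_ne_zero_iff.mpr hk0)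
  by_cases hk2 : (k : ℕ) ≤ N / 2
  · rw [← hf k hk1 hk2, star_star]
  · have hneg : ((-k : Fin N) : ℕ) = N - k := by rw [Fin.val_neg, if_neg hk0]
    simpa using hf (-k) (by omega) (by omega)

/-- If `U` is unitary with first column `(1/√N)·𝟏` and columns satisfying
`u_k = conj (u_{N+2-k})` for `k = 2, …, ⌊N/2⌋+1` (1-based; 0-based below), then there
exists `a` with pairwise distinct unimodular components such that
`U * diagonal a * U⁻¹` is a real matrix, i.e. a normal atomic filter exists. -/
theorem exists_normal_atomic_filter (N : ℕ) (hN : 1 ≤ N)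
    (U : Matrix (Fin N) (Fin N) ℂ) (hU : U ∈ Matrix.unitaryGroup (Fin N) ℂ)
    (hu1 : ∀ n, U n ⟨0, hN⟩ = (Real.sqrt N : ℂ)⁻¹)
    (hsymm : ∀ (k : Fin N) (hk1 : 1 ≤ (k : ℕ)) (hk2 : (k : ℕ) ≤ N / 2),
      ∀ n, U n k = star (U n ⟨N - (k : ℕ), by omega⟩)) :
    ∃ a : Fin N → ℂ, Function.Injective a ∧ (∀ k, ‖a k‖ = 1) ∧
      ∀ i j, ((U * Matrix.diagonal a * U⁻¹) i j).im = 0 := by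
  have : NeZero N := ⟨by omega⟩
  let ψ : AddChar (ZMod N) ℂ := ZMod.stdAddChar
  let e : Fin N ≃+* ZMod N := ZMod.finEquiv N
  have hcol (n : Fin N) : ∀ k, star (U n k) = U n (-k) := by
    refine Fin.star_apply_eq_apply_neg_of_le_half (U n) ?_ fun k hk1 hk2 => ?_
    · rw [show (0 : Fin N) = ⟨0, hN⟩ from rfl, hu1, ← Complex.ofReal_inv]
      exact Complex.conj_ofReal _
    · have hk0 : k ≠ 0 := Fin.val_ne_zero_iff.mp (by omega)
      have hneg : -k = ⟨N - k, by omega⟩ := Fin.ext (by rw [Fin.val_neg, if_neg hk0])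
      rw [hneg, ← hsymm k hk1 hk2]
  have hU_inv : U⁻¹ = Uᴴ := inv_eq_left_inv (mem_unitaryGroup_iff'.mp hU)
  have hψ_neg (k : Fin N) : star (ψ (e k)) = ψ (e (-k)) := by
    rw [map_neg, ψ.map_neg_eq_conj]; rfl
  refine ⟨ψ ∘ e, ZMod.injective_stdAddChar.comp e.injective, fun k => ψ.norm_apply _,
    fun i j => ?_⟩
  rw [← Complex.conj_eq_iff_im, hU_inv]
  exact star_mul_diagonal_mul_conjTranspose_apply_of_perm (Equiv.neg _) hcol hψ_neg i j
end

section
/- Let N ≥ 1 and let W ∈ ℝ^{N×N} be a symmetric matrix (the weighted adjacency matrix of an undirected graph). Let D = diag(d_1, …, d_N) with d_i = Σ_{j=1}^N w_{ij}, let L = D − W, and let U ∈ ℂ^{N×N} be a unitary matrix with L = U·Λ·U* for a diagonal matrix Λ = diag(λ_1, …, λ_N) and with first column u_1 = (1/√N)·𝟏. Then there exists a ∈ ℂ^N such that W = U·diag(a)·U⁻¹ (i.e., W is a graph filter) if and only if d_1 = d_2 = … = d_N (i.e., the graph is regular). -/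
/-!
The first column of `U` is the constant vector `(1/√N)·𝟏`. If `W = U·diag(a)·U⁻¹`, then
`W U = U diag(a)`, so that column is an eigenvector of `W`; since `W 𝟏` is the vector of degrees,
every degree equals `a₁`. Conversely, if every degree equals `d`, then `W = d·I − L` and
`L = U·diag(λ)·U*` give `W = U·diag(d − λ)·U⁻¹`.
-/

open Matrix

namespace Matrix

variable {n R : Type*} [Fintype n] [DecidableEq n] [Field R]

theorem sum_row_eq_of_eq_conj_diagonal_of_col_const {M U : Matrix n n R} {a : n → R}
    (hU : IsUnit U.det) (hM : M = U * diagonal a * U⁻¹) {j : n} {c : R} (hc : c ≠ 0)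
    (hcol : ∀ k, U k j = c) (i : n) : ∑ k, M i k = a j := by
  have hMU : M * U = U * diagonal a := by
    rw [hM, Matrix.mul_assoc, nonsing_inv_mul _ hU, Matrix.mul_one]
  have hij := congrFun (congrFun hMU i) j
  rw [mul_diagonal, mul_apply] at hij
  simp only [hcol, ← Finset.sum_mul] at hij
  rw [mul_comm c] at hij
  exact mul_right_cancel₀ hc hij

theorem diagonal_const_sub_conj_diagonal {U : Matrix n n R} (hU : IsUnit U.det) (c : R)
    (lam : n → R) :
    diagonal (fun _ => c) - U * diagonal lam * U⁻¹ = U * diagonal (fun j => c - lam j) * U⁻¹ := by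
  rw [← diagonal_sub, ← smul_one_eq_diagonal, Matrix.mul_sub, Matrix.sub_mul, Matrix.mul_smul,
    Matrix.mul_one, Matrix.smul_mul, mul_nonsing_inv _ hU]

end Matrix

theorem adjacency_is_filter_iff_regular_general (N : ℕ) (hN : 1 ≤ N)
    (W : Matrix (Fin N) (Fin N) ℝ)
    (d : Fin N → ℝ) (hd : ∀ i, d i = ∑ j, W i j)
    (L : Matrix (Fin N) (Fin N) ℝ) (hL : L = Matrix.diagonal d - W)
    (U : Matrix (Fin N) (Fin N) ℂ) (hU : U ∈ Matrix.unitaryGroup (Fin N) ℂ)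
    (lam : Fin N → ℂ)
    (hLU : L.map Complex.ofReal = U * Matrix.diagonal lam * U.conjTranspose)
    (hu1 : ∀ n, U n ⟨0, hN⟩ = (Real.sqrt N : ℂ)⁻¹) :
    (∃ a : Fin N → ℂ, W.map Complex.ofReal = U * Matrix.diagonal a * U⁻¹) ↔
      ∀ i j, d i = d j := by
  have hUdet : IsUnit U.det := UnitaryGroup.det_isUnit ⟨U, hU⟩
  have hUinv : U⁻¹ = Uᴴ := inv_eq_left_inv (mem_unitaryGroup_iff'.1 hU)
  constructor
  · rintro ⟨a, ha⟩
    have hc : (Real.sqrt N : ℂ)⁻¹ ≠ 0 := by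
      have : (0 : ℝ) < N := by exact_mod_cast hN
      simpa using (Real.sqrt_pos.2 this).ne'
    have hdeg (i : Fin N) : (d i : ℂ) = a ⟨0, hN⟩ := by
      rw [hd i, Complex.ofReal_sum]
      exact sum_row_eq_of_eq_conj_diagonal_of_col_const hUdet ha hc hu1 i
    intro i j
    exact_mod_cast (hdeg i).trans (hdeg j).symm
  · intro hreg
    have hconst : d = fun _ => d ⟨0, hN⟩ := funext fun i => hreg i _
    refine ⟨fun j => d ⟨0, hN⟩ - lam j, ?_⟩
    have hWL : W = diagonal d - L := by rw [hL, sub_sub_cancel]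
    rw [← diagonal_const_sub_conj_diagonal hUdet, hUinv, ← hLU, hWL, hconst,
      Matrix.map_sub _ (fun _ _ => Complex.ofReal_sub _ _), diagonal_map Complex.ofReal_zero]

/-- For a symmetric weighted adjacency matrix `W` with degrees `d`,
Laplacian `L = D - W`, and a unitary diagonalization `L = U Λ U*` with first column of
`U` equal to `(1/√N)·𝟏`, the matrix `W` is a graph filter (i.e. `W = U·diag(a)·U⁻¹`
for some `a`) iff the graph is regular (all degrees equal). -/
theorem adjacency_is_filter_iff_regular (N : ℕ) (hN : 1 ≤ N)
    (W : Matrix (Fin N) (Fin N) ℝ) (hW : W.IsSymm)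
    (d : Fin N → ℝ) (hd : ∀ i, d i = ∑ j, W i j)
    (L : Matrix (Fin N) (Fin N) ℝ) (hL : L = Matrix.diagonal d - W)
    (U : Matrix (Fin N) (Fin N) ℂ) (hU : U ∈ Matrix.unitaryGroup (Fin N) ℂ)
    (lam : Fin N → ℂ)
    (hLU : L.map Complex.ofReal = U * Matrix.diagonal lam * U.conjTranspose)
    (hu1 : ∀ n, U n ⟨0, hN⟩ = (Real.sqrt N : ℂ)⁻¹) :
    (∃ a : Fin N → ℂ, W.map Complex.ofReal = U * Matrix.diagonal a * U⁻¹) ↔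
      ∀ i j, d i = d j :=
  adjacency_is_filter_iff_regular_general N hN W d hd L hL U hU lam hLU hu1
end

section
/- Let N ≥ 1, J ≥ 1, let U ∈ ℂ^{N×N} be unitary with columns u_1, …, u_N, let g ∈ ℂ^N with ĝ := U⁻¹ g, and let A = (a_1, …, a_J) ∈ ℂ^{N×J} be a matrix whose N row vectors are orthonormal, i.e. Σ_{j=1}^J conj(a_j(l))·a_j(l') = δ_{l,l'} for all l, l' = 1, …, N. For j = 1, …, J and k = 1, …, N define the time-frequency atom g_{a_j,k} := (H_{a_j} g) ⊙ u_k, where H_{a_j} = U·diag(a_j)·U⁻¹ and ⊙ is the entrywise (Hadamard) product, and define C_n := Σ_{l=1}^N |ĝ(l)|²·|u_l(n)|² for n = 1, …, N. If C_n > 0 for all n, then for every f ∈ ℂ^N and every n = 1, …, N: f(n) = (1/C_n)·Σ_{j=1}^J Σ_{k=1}^N ⟨f, g_{a_j,k}⟩ · g_{a_j,k}(n), and moreover α·‖f‖₂² ≤ Σ_{j=1}^J Σ_{k=1}^N |⟨f, g_{a_j,k}⟩|² ≤ β·‖f‖₂², where α = min_{1≤n≤N} C_n and β = max_{1≤n≤N}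 C_n. -/
/-!
Since `U` is unitary, `∑ₖ conj(u_k(m)) u_k(n) = δ_{m,n}`, so the modulations by the `u_k` make the
frame operator of the atoms diagonal, with entry `∑ⱼ |(H_{a_j} g)(n)|²` at `n`. Writing
`H_{a_j} g = U (a_j ⊙ ĝ)`, this entry is `∑ⱼ |∑ₗ a_j(l) u_l(n) ĝ(l)|²`, which the orthonormality of
the rows of `A` turns into `∑ₗ |u_l(n) ĝ(l)|² = C_n`. A diagonal frame operator `diag(C)` gives the
reconstruction formula and the energy identity `∑ |⟨f, φ⟩|² = ∑ₙ C_n |f(n)|²` at once.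
-/

open Finset Matrix ComplexConjugate

section FrameOperator

variable {𝕜 ι ν : Type*} [RCLike 𝕜] [Fintype ι] [Fintype ν] [DecidableEq ν]

def HasDiagonalFrameOperator (φ : ι → ν → 𝕜) (c : ν → ℝ) : Prop :=
  ∀ m n, ∑ i, star (φ i m) * φ i n = if m = n then (c n : 𝕜) else 0

namespace HasDiagonalFrameOperator

variable {φ : ι → ν → 𝕜} {c : ν → ℝ}

theorem sum_coeff_mul (hφ : HasDiagonalFrameOperator φ c) (f : ν → 𝕜) (n : ν) :
    ∑ i, (∑ m, f m * star (φ i m)) * φ i n = c n * f n := by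
  calc ∑ i, (∑ m, f m * star (φ i m)) * φ i n
      = ∑ m, f m * ∑ i, star (φ i m) * φ i n := by
        simp only [sum_mul, mul_sum, mul_assoc]
        exact sum_comm
    _ = c n * f n := by
        simp only [hφ _ n, mul_ite, mul_zero, sum_ite_eq', mem_univ, if_true]
        exact mul_comm _ _

theorem sum_norm_sq_coeff (hφ : HasDiagonalFrameOperator φ c) (f : ν → 𝕜) :
    ∑ i, ‖∑ m, f m * star (φ i m)‖ ^ 2 = ∑ n, c n * ‖f n‖ ^ 2 := by
  apply RCLike.ofReal_injective (K := 𝕜)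
  push_cast
  calc ∑ i, (‖∑ m, f m * star (φ i m)‖ : 𝕜) ^ 2
      = ∑ n, conj (f n) * ∑ i, (∑ m, f m * star (φ i m)) * φ i n := by
        simp only [← RCLike.mul_conj, map_sum, map_mul, mul_sum]
        rw [sum_comm]
        refine sum_congr rfl fun i _ => sum_congr rfl fun n _ => ?_
        simp only [RCLike.star_def, RCLike.conj_conj]
        ring
    _ = ∑ n, (c n : 𝕜) * (‖f n‖ : 𝕜) ^ 2 := by
        simp only [hφ.sum_coeff_mul, ← RCLike.conj_mul]
        exact sum_congr rfl fun n _ => by ring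

theorem mul_sum_norm_sq_le (hφ : HasDiagonalFrameOperator φ c) {α : ℝ} (hα : ∀ n, α ≤ c n)
    (f : ν → 𝕜) :
    α * ∑ n, ‖f n‖ ^ 2 ≤ ∑ i, ‖∑ m, f m * star (φ i m)‖ ^ 2 := by
  rw [hφ.sum_norm_sq_coeff, mul_sum]
  gcongr with n
  exact hα n

theorem sum_norm_sq_le_mul (hφ : HasDiagonalFrameOperator φ c) {β : ℝ} (hβ : ∀ n, c n ≤ β)
    (f : ν → 𝕜) :
    ∑ i, ‖∑ m, f m * star (φ i m)‖ ^ 2 ≤ β * ∑ n, ‖f n‖ ^ 2 := by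
  rw [hφ.sum_norm_sq_coeff, mul_sum]
  gcongr with n
  exact hβ n

end HasDiagonalFrameOperator

theorem sum_norm_sq_sum_mul_of_orthonormal {a : ι → ν → 𝕜}
    (ha : ∀ l l', ∑ j, star (a j l) * a j l' = if l = l' then 1 else 0) (v : ν → 𝕜) :
    ∑ j, ‖∑ l, a j l * v l‖ ^ 2 = ∑ l, ‖v l‖ ^ 2 := by
  have hφ : HasDiagonalFrameOperator (fun j l => star (a j l)) 1 := by
    intro m n
    simp only [star_star, mul_comm (a _ m), ha n m, eq_comm (a := n)]
    split_ifs <;> simp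
  simpa [mul_comm] using hφ.sum_norm_sq_coeff v

end FrameOperator

theorem Matrix.sum_star_mul_of_mem_unitaryGroup {α ν : Type*} [CommRing α] [StarRing α]
    [Fintype ν] [DecidableEq ν] {U : Matrix ν ν α} (hU : U ∈ unitaryGroup ν α) (m n : ν) :
    ∑ k, star (U m k) * U n k = if m = n then 1 else 0 := by
  have h := congrFun₂ (mem_unitaryGroup_iff.mp hU) n m
  simp only [mul_apply, star_apply, one_apply] at h
  simpa only [mul_comm, eq_comm] using h

theorem Matrix.mul_diagonal_mul_mulVec {R ν : Type*} [CommSemiring R] [Fintype ν]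
    [DecidableEq ν] (U V : Matrix ν ν R) (a g : ν → R) :
    (U * diagonal a * V) *ᵥ g = U *ᵥ (a * V *ᵥ g) := by
  rw [← mulVec_mulVec, ← mulVec_mulVec]
  congr 1
  ext l
  exact mulVec_diagonal a _ l

theorem hasDiagonalFrameOperator_mul_unitary {𝕜 ι ν : Type*} [RCLike 𝕜] [Fintype ι]
    [Fintype ν] [DecidableEq ν] {U : Matrix ν ν 𝕜} (hU : U ∈ unitaryGroup ν 𝕜)
    (w : ι → ν → 𝕜) :
    HasDiagonalFrameOperator (fun p : ι × ν => fun n => w p.1 n * U n p.2)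
      (fun n => ∑ j, ‖w j n‖ ^ 2) := by
  intro m n
  simp only [Fintype.sum_prod_type, star_mul', mul_mul_mul_comm, ← mul_sum,
    sum_star_mul_of_mem_unitaryGroup hU]
  split_ifs with h
  · subst h
    push_cast
    simp [RCLike.conj_mul]
  · simp

theorem windowed_fourier_frame_general (N J : ℕ) (hN : 1 ≤ N)
    (U : Matrix (Fin N) (Fin N) ℂ) (hU : U ∈ Matrix.unitaryGroup (Fin N) ℂ)
    (g : Fin N → ℂ) (a : Fin J → Fin N → ℂ)
    (horth : ∀ l l' : Fin N,
      ∑ j : Fin J, star (a j l) * a j l' = if l = l' then 1 else 0)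
    (ghat : Fin N → ℂ) (hghat : ghat = U⁻¹.mulVec g)
    (atom : Fin J → Fin N → Fin N → ℂ)
    (hatom : ∀ j k n,
      atom j k n = (U * Matrix.diagonal (a j) * U⁻¹).mulVec g n * U n k)
    (C : Fin N → ℝ)
    (hC : ∀ n, C n = ∑ l, ‖ghat l‖ ^ 2 * ‖U n l‖ ^ 2)
    (hCpos : ∀ n, 0 < C n) :
    (∀ (f : Fin N → ℂ) (n : Fin N),
      f n = ((C n : ℂ))⁻¹ *
        ∑ j, ∑ k, (∑ m, f m * star (atom j k m)) * atom j k n) ∧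
    (∀ f : Fin N → ℂ,
      (Finset.univ.inf' ⟨⟨0, hN⟩, Finset.mem_univ _⟩ C) *
          ∑ n, ‖f n‖ ^ 2 ≤
        ∑ j, ∑ k, ‖∑ m, f m * star (atom j k m)‖ ^ 2 ∧
      ∑ j, ∑ k, ‖∑ m, f m * star (atom j k m)‖ ^ 2 ≤
        (Finset.univ.sup' ⟨⟨0, hN⟩, Finset.mem_univ _⟩ C) *
          ∑ n, ‖f n‖ ^ 2) := by
  have hC_eq : C = fun n => ∑ j, ‖((U * diagonal (a j) * U⁻¹) *ᵥ g) n‖ ^ 2 := by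
    funext n
    simp only [mul_diagonal_mul_mulVec, ← hghat]
    simp only [mulVec, dotProduct, Pi.mul_apply, mul_left_comm (U n _)]
    rw [sum_norm_sq_sum_mul_of_orthonormal horth, hC]
    simp only [norm_mul, mul_pow, mul_comm]
  have hφ : HasDiagonalFrameOperator (fun p : Fin J × Fin N => atom p.1 p.2) C := by
    rw [hC_eq]
    convert hasDiagonalFrameOperator_mul_unitary hU
      fun j n => ((U * diagonal (a j) * U⁻¹) *ᵥ g) n using 1
    funext p n
    exact hatom p.1 p.2 n
  refine ⟨fun f n => ?_, fun f => ⟨?_, ?_⟩⟩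
  · rw [← Fintype.sum_prod_type', hφ.sum_coeff_mul f n]
    exact (inv_mul_cancel_left₀ (by exact_mod_cast (hCpos n).ne') _).symm
  · simpa only [Fintype.sum_prod_type] using
      hφ.mul_sum_norm_sq_le (fun n => inf'_le C (mem_univ n)) f
  · simpa only [Fintype.sum_prod_type] using
      hφ.sum_norm_sq_le_mul (fun n => le_sup' C (mem_univ n)) f

/-- Frame and reconstruction theorem for windowed Fourier time-frequency
atoms `g_{a_j,k} = (H_{a_j} g) ⊙ u_k` built from a matrix `A = (a_1, …, a_J)` whose `N`
rows are orthonormal. If `C_n := Σ_l |ĝ(l)|²|u_l(n)|² > 0` for all `n`, then every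
`f` satisfies the reconstruction formula and the frame inequalities with bounds
`α = min_n C_n`, `β = max_n C_n`. -/
theorem windowed_fourier_frame (N J : ℕ) (hN : 1 ≤ N) (hJ : 1 ≤ J)
    (U : Matrix (Fin N) (Fin N) ℂ) (hU : U ∈ Matrix.unitaryGroup (Fin N) ℂ)
    (g : Fin N → ℂ) (a : Fin J → Fin N → ℂ)
    (horth : ∀ l l' : Fin N,
      ∑ j : Fin J, star (a j l) * a j l' = if l = l' then 1 else 0)
    (ghat : Fin N → ℂ) (hghat : ghat = U⁻¹.mulVec g)
    (atom : Fin J → Fin N → Fin N → ℂ)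
    (hatom : ∀ j k n,
      atom j k n = (U * Matrix.diagonal (a j) * U⁻¹).mulVec g n * U n k)
    (C : Fin N → ℝ)
    (hC : ∀ n, C n = ∑ l, ‖ghat l‖ ^ 2 * ‖U n l‖ ^ 2)
    (hCpos : ∀ n, 0 < C n) :
    (∀ (f : Fin N → ℂ) (n : Fin N),
      f n = ((C n : ℂ))⁻¹ *
        ∑ j, ∑ k, (∑ m, f m * star (atom j k m)) * atom j k n) ∧
    (∀ f : Fin N → ℂ,
      (Finset.univ.inf' ⟨⟨0, hN⟩, Finset.mem_univ _⟩ C) *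
          ∑ n, ‖f n‖ ^ 2 ≤
        ∑ j, ∑ k, ‖∑ m, f m * star (atom j k m)‖ ^ 2 ∧
      ∑ j, ∑ k, ‖∑ m, f m * star (atom j k m)‖ ^ 2 ≤
        (Finset.univ.sup' ⟨⟨0, hN⟩, Finset.mem_univ _⟩ C) *
          ∑ n, ‖f n‖ ^ 2) :=
  windowed_fourier_frame_general N J hN U hU g a horth ghat hghat atom hatom C hC hCpos
end

section
/- Let N ≥ 1 and let a_1, …, a_N be pairwise distinct complex numbers. The matrix A ∈ ℂ^{N×N} with entries A_{k,j} = (1/√N)·a_k^{j−1} (k, j = 1, …, N) is unitary if and only if there exist a permutation matrix P ∈ ℂ^{N×N} and a diagonal matrix C = diag(1, c, c², …, c^{N−1}) with |c| = 1 such that A = P·U·C, where U is the discrete Fourier basis matrix with entries U_{n,k} = (1/√N)·ω^{(n−1)(k−1)}, ω = e^{2πi/N}. -/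
/-!
Up to the factor `N`, the Gram matrix `A Aᴴ` has entries `∑_{j<N} (a_k conj a_l)^j`. On the
diagonal this is `∑_j |a_k|^{2j} = N`, forcing `|a_k| = 1` once `N ≥ 2`; off the diagonal a
vanishing geometric sum with ratio `a_k conj a_l ≠ 1` means `(a_k conj a_l)^N = 1`. Hence the
`a_k conj a_0` are `N` distinct `N`-th roots of unity, i.e. `a_k = ω^{σ k} a_0` for a permutation
`σ`, which is exactly `A = P U C` with `c = a_0`. Conversely, such nodes make the same geometric
sums vanish off the diagonal.
-/

open Complex ComplexConjugate Finset Matrix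

lemma eq_one_of_geom_sum_eq_natCast {x : ℝ} {N : ℕ} (hx : 0 ≤ x) (hN : 2 ≤ N)
    (h : ∑ i ∈ range N, x ^ i = N) : x = 1 := by
  have h1 : 1 ∈ range N := mem_range.2 hN
  by_contra hne
  rcases lt_or_gt_of_ne hne with hlt | hgt
  · have : ∑ i ∈ range N, x ^ i < ∑ i ∈ range N, (1 : ℝ) ^ i :=
      sum_lt_sum (fun i _ => by simpa using pow_le_one₀ hx hlt.le) ⟨1, h1, by simpa using hlt⟩
    simp [h] at this
  · have : ∑ i ∈ range N, (1 : ℝ) ^ i < ∑ i ∈ range N, x ^ i :=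
      sum_lt_sum (fun i _ => by simpa using one_le_pow₀ hgt.le) ⟨1, h1, by simpa using hgt⟩
    simp [h] at this

lemma geom_sum_eq_zero_iff_pow_eq_one {K : Type*} [Field K] {z : K} (hz : z ≠ 1) (N : ℕ) :
    ∑ i ∈ range N, z ^ i = 0 ↔ z ^ N = 1 := by
  rw [geom_sum_eq hz, div_eq_zero_iff, sub_eq_zero, sub_eq_zero, or_iff_left hz]

namespace Complex

lemma mul_conj_eq_one_of_norm_eq_one {z : ℂ} (hz : ‖z‖ = 1) : z * conj z = 1 := by
  rw [mul_conj', hz, ofReal_one, one_pow]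

lemma norm_eq_one_of_geom_sum_mul_conj {z : ℂ} {N : ℕ} (hN : 2 ≤ N)
    (h : ∑ i ∈ range N, (z * conj z) ^ i = N) : ‖z‖ = 1 := by
  rw [mul_conj'] at h
  have hsq : ‖z‖ ^ 2 = 1 :=
    eq_one_of_geom_sum_eq_natCast (by positivity) hN (by exact_mod_cast h)
  exact (pow_eq_one_iff_of_nonneg (norm_nonneg z) two_ne_zero).1 hsq

end Complex

namespace IsPrimitiveRoot

variable {N : ℕ}

lemma exists_perm_eq_pow {R : Type*} [CommRing R] [IsDomain R] [NeZero N] {ζ : R}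
    (hζ : IsPrimitiveRoot ζ N) {r : Fin N → R} (hr : Function.Injective r)
    (hpow : ∀ k, r k ^ N = 1) :
    ∃ σ : Equiv.Perm (Fin N), ∀ k, r k = ζ ^ (σ k : ℕ) := by
  choose f hf using fun k => hζ.eq_pow_of_pow_eq_one (hpow k)
  set g : Fin N → Fin N := fun k => ⟨f k, (hf k).1⟩
  have hg : Function.Injective g := fun k l hkl =>
    hr <| by rw [← (hf k).2, ← (hf l).2]; exact congrArg (ζ ^ ·.val) hkl
  exact ⟨Equiv.ofBijective g hg.bijective_of_finite, fun k => (hf k).2.symm⟩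

lemma geom_sum_pow_mul_conj_pow {ζ : ℂ} (hζ : IsPrimitiveRoot ζ N) {n m : ℕ}
    (hn : n < N) (hm : m < N) :
    ∑ j ∈ range N, (ζ ^ n * conj (ζ ^ m)) ^ j = if n = m then (N : ℂ) else 0 := by
  have hunit : ∀ i, ζ ^ i * conj (ζ ^ i) = 1 := fun i =>
    mul_conj_eq_one_of_norm_eq_one <| by rw [norm_pow, hζ.norm'_eq_one (by omega), one_pow]
  split_ifs with hnm
  · rw [hnm, hunit]; simp
  · rw [geom_sum_eq_zero_iff_pow_eq_one]
    · rw [mul_pow, ← map_pow, ← pow_mul, ← pow_mul, mul_comm n, mul_comm m, pow_mul, pow_mul,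
        hζ.pow_eq_one, one_pow, one_pow, map_one, one_mul]
    · intro h1
      refine hnm (hζ.pow_inj hn hm ?_)
      calc ζ ^ n = ζ ^ n * conj (ζ ^ m) * ζ ^ m := by
            rw [mul_assoc, mul_comm (conj _), hunit, mul_one]
        _ = ζ ^ m := by rw [h1, one_mul]

end IsPrimitiveRoot

namespace Matrix

variable {N : ℕ}

lemma star_vandermonde {R : Type*} [CommRing R] [StarRing R] (v : Fin N → R) :
    star (vandermonde v) = (vandermonde (star v))ᵀ := by
  ext; simp [vandermonde_apply]

lemma vandermonde_mul_star_apply {R : Type*} [CommRing R] [StarRing R] (v : Fin N → R)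
    (k l : Fin N) :
    (vandermonde v * star (vandermonde v)) k l = ∑ j ∈ range N, (v k * star (v l)) ^ j := by
  rw [star_vandermonde, vandermonde_mul_vandermonde_transpose]
  exact Fin.sum_univ_eq_sum_range (fun j => (v k * star (v l)) ^ j) N

lemma permMatrix_mul_vandermonde_mul_diagonal {R : Type*} [CommRing R]
    (σ : Equiv.Perm (Fin N)) (v : Fin N → R) (c : R) :
    σ.toPEquiv.toMatrix * vandermonde v * diagonal (fun j : Fin N => c ^ (j : ℕ)) =
      vandermonde (fun k => v (σ k) * c) := by
  ext k j
  rw [mul_diagonal, PEquiv.toMatrix_toPEquiv_mul]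
  simp [vandermonde_apply, mul_pow]

lemma smul_vandermonde_mem_unitaryGroup_iff [NeZero N] (a : Fin N → ℂ) :
    (Real.sqrt N : ℂ)⁻¹ • vandermonde a ∈ unitaryGroup (Fin N) ℂ ↔
      ∀ k l, ∑ j ∈ range N, (a k * conj (a l)) ^ j = if k = l then (N : ℂ) else 0 := by
  have hN : (N : ℂ) ≠ 0 := Nat.cast_ne_zero.2 (NeZero.ne N)
  have hscale : (Real.sqrt N : ℂ)⁻¹ * star (Real.sqrt N : ℂ)⁻¹ = (N : ℂ)⁻¹ := by
    rw [star_inv₀, Complex.star_def, conj_ofReal, ← mul_inv, ← ofReal_mul,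
      Real.mul_self_sqrt N.cast_nonneg, ofReal_natCast]
  rw [mem_unitaryGroup_iff, star_smul, smul_mul_smul_comm, hscale, inv_smul_eq_iff₀ hN,
    ← Matrix.ext_iff]
  simp only [vandermonde_mul_star_apply, smul_apply, one_apply, smul_eq_mul, mul_ite, mul_one,
    mul_zero]
  rfl

lemma exists_perm_pow_mul_of_smul_vandermonde_mem_unitaryGroup {ζ : ℂ}
    (hζ : IsPrimitiveRoot ζ N) (hN : 2 ≤ N) {a : Fin N → ℂ} (ha : Function.Injective a)
    (hU : (Real.sqrt N : ℂ)⁻¹ • vandermonde a ∈ unitaryGroup (Fin N) ℂ) :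
    ∃ (σ : Equiv.Perm (Fin N)) (c : ℂ), ‖c‖ = 1 ∧ ∀ k, a k = ζ ^ (σ k : ℕ) * c := by
  have : NeZero N := ⟨by omega⟩
  have h := (smul_vandermonde_mem_unitaryGroup_iff a).1 hU
  have hnorm : ∀ k, ‖a k‖ = 1 := fun k =>
    norm_eq_one_of_geom_sum_mul_conj hN (by simpa using h k k)
  set c := a 0
  have hc : c * conj c = 1 := mul_conj_eq_one_of_norm_eq_one (hnorm 0)
  set r : Fin N → ℂ := fun k => a k * conj c
  have hr : Function.Injective r := fun k l hkl =>
    ha (mul_right_cancel₀ (right_ne_zero_of_mul_eq_one hc) hkl)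
  have hpow : ∀ k, r k ^ N = 1 := by
    intro k
    by_cases hk : k = 0
    · subst hk
      change (c * conj c) ^ N = 1
      rw [hc, one_pow]
    · have hr1 : r k ≠ 1 := fun h1 => hk (hr (h1.trans hc.symm))
      exact (geom_sum_eq_zero_iff_pow_eq_one hr1 N).1 (by simpa [hk] using h k 0)
  obtain ⟨σ, hσ⟩ := hζ.exists_perm_eq_pow hr hpow
  refine ⟨σ, c, hnorm 0, fun k => ?_⟩
  rw [← hσ k, mul_assoc, mul_comm (conj c), hc, mul_one]

lemma smul_vandermonde_pow_mul_mem_unitaryGroup [NeZero N] {ζ : ℂ}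
    (hζ : IsPrimitiveRoot ζ N) (σ : Equiv.Perm (Fin N)) {c : ℂ} (hc : ‖c‖ = 1) :
    (Real.sqrt N : ℂ)⁻¹ • vandermonde (fun k => ζ ^ (σ k : ℕ) * c) ∈ unitaryGroup (Fin N) ℂ := by
  refine (smul_vandermonde_mem_unitaryGroup_iff _).2 fun k l => ?_
  rw [map_mul, mul_mul_mul_comm, mul_conj_eq_one_of_norm_eq_one hc, mul_one,
    hζ.geom_sum_pow_mul_conj_pow (σ k).isLt (σ l).isLt]
  simp only [Fin.val_inj, σ.injective.eq_iff]

end Matrix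

/-- For pairwise distinct `a_1, …, a_N`, the matrix
`A k j = (1/√N)·a_k^{j-1}` is unitary iff `A = P·U·C` for some permutation matrix `P`
and diagonal matrix `C = diag(1, c, …, c^{N-1})` with `|c| = 1`, where `U` is the
discrete Fourier basis matrix. -/
theorem vandermonde_unitary_iff (N : ℕ) (hN : 1 ≤ N)
    (a : Fin N → ℂ) (ha : Function.Injective a)
    (A : Matrix (Fin N) (Fin N) ℂ)
    (hA : ∀ k j, A k j = (Real.sqrt N : ℂ)⁻¹ * a k ^ (j : ℕ)) :
    A ∈ Matrix.unitaryGroup (Fin N) ℂ ↔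
      ∃ (σ : Equiv.Perm (Fin N)) (c : ℂ), ‖c‖ = 1 ∧
        A = (σ.toPEquiv.toMatrix : Matrix (Fin N) (Fin N) ℂ) *
            (Matrix.of fun n k : Fin N => (Real.sqrt N : ℂ)⁻¹ *
              Complex.exp (2 * Real.pi * Complex.I / N) ^ ((n : ℕ) * (k : ℕ))) *
            Matrix.diagonal (fun j : Fin N => c ^ (j : ℕ)) := by
  set ζ := Complex.exp (2 * Real.pi * Complex.I / N)
  have : NeZero N := ⟨by omega⟩
  have hζ : IsPrimitiveRoot ζ N := Complex.isPrimitiveRoot_exp N (by omega)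
  have hA' : A = (Real.sqrt N : ℂ)⁻¹ • vandermonde a := by
    ext k j; simp [hA, vandermonde_apply]
  have hF : (Matrix.of fun n k : Fin N => (Real.sqrt N : ℂ)⁻¹ * ζ ^ ((n : ℕ) * (k : ℕ))) =
      (Real.sqrt N : ℂ)⁻¹ • vandermonde (fun n : Fin N => ζ ^ (n : ℕ)) := by
    ext; simp [vandermonde_apply, pow_mul]
  simp only [hF, Matrix.mul_smul, Matrix.smul_mul, permMatrix_mul_vandermonde_mul_diagonal, hA']
  constructor
  · intro hU
    obtain rfl | hN2 : N = 1 ∨ 2 ≤ N := by omega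
    · refine ⟨1, 1, norm_one, ?_⟩
      congr 1; ext k j; simp [Fin.fin_one_eq_zero j, vandermonde_apply]
    · obtain ⟨σ, c, hc, hac⟩ :=
        exists_perm_pow_mul_of_smul_vandermonde_mem_unitaryGroup hζ hN2 ha hU
      exact ⟨σ, c, hc, by rw [← funext hac]⟩
  · rintro ⟨σ, c, hc, heq⟩
    exact heq ▸ smul_vandermonde_pow_mul_mem_unitaryGroup hζ σ hc
end

section
/- Let N ≥ 1, let U ∈ ℂ^{N×N} be unitary with columns u_1, …, u_N, let g ∈ ℂ^N with ĝ := U⁻¹ g, and suppose C_n := Σ_{l=1}^N |ĝ(l)|²·|u_l(n)|² > 0 for all n = 1, …, N. Let ω = e^{2πi/N}, set a := (1, ω, ω², …, ω^{N−1})^T, H_a := U·diag(a)·U⁻¹, and define the time-frequency atoms g_{j,k} := (1/√N)·(H_a^{j−1} g) ⊙ u_k for j, k = 1, …, N. Then these N² atoms constitute a frame of ℂ^N with bounds α = min_n C_n and β = max_n C_n, i.e., α·‖f‖₂² ≤ Σ_{j=1}^N Σ_{k=1}^N |⟨f, g_{j,k}⟩|² ≤ β·‖f‖₂² for all f ∈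 ℂ^N, and the reconstruction formula f(n) = (1/C_n)·Σ_{j=1}^N Σ_{k=1}^N ⟨f, g_{j,k}⟩·g_{j,k}(n) holds for every f ∈ ℂ^N and every n = 1, …, N. -/
/-!
The frame operator `S m n = ∑_{j,k} conj (g_{j,k} m) * g_{j,k} n` of the atoms is the diagonal
matrix `diag C`. Summing over `k` first, orthonormality of the rows of `U` kills the off-diagonal
entries; on the diagonal, `(H_a^j g) n = ∑_l U n l * ω^{l j} * ĝ l` is a discrete Fourier
transform in `l`, so orthogonality of the `N`-th roots of unity (Parseval) gives
`∑_j |(H_a^j g) n|² = N * C n`. For a family with diagonal frame operator both the frame bounds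
and the reconstruction formula are immediate.
-/
open Finset Matrix

section OrthogonalColumns

variable {ι n : Type*} [Fintype ι] [Fintype n] [DecidableEq n]
  {φ : ι → n → ℂ} {c : n → ℝ}

theorem sum_coeff_mul_eq_of_columns_orthogonal
    (hφ : ∀ m m', ∑ i, star (φ i m) * φ i m' = if m = m' then (c m' : ℂ) else 0)
    (f : n → ℂ) (m' : n) :
    ∑ i, (∑ m, f m * star (φ i m)) * φ i m' = c m' * f m' := by
  calc ∑ i, (∑ m, f m * star (φ i m)) * φ i m'
      = ∑ m, f m * ∑ i, star (φ i m) * φ i m' := by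
        simp only [sum_mul, mul_sum, mul_assoc]
        exact sum_comm
    _ = c m' * f m' := by
        simp only [hφ, mul_ite, mul_zero, sum_ite_eq', mem_univ, if_true]
        exact mul_comm _ _

theorem sum_norm_coeff_sq_eq_of_columns_orthogonal
    (hφ : ∀ m m', ∑ i, star (φ i m) * φ i m' = if m = m' then (c m' : ℂ) else 0)
    (f : n → ℂ) :
    ∑ i, ‖∑ m, f m * star (φ i m)‖ ^ 2 = ∑ m, c m * ‖f m‖ ^ 2 := by
  apply Complex.ofReal_injective
  push_cast
  simp only [← Complex.mul_conj']
  calc ∑ i, (∑ m, f m * star (φ i m)) * (starRingEnd ℂ) (∑ m, f m * star (φ i m))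
      = ∑ m', (starRingEnd ℂ) (f m') * ∑ i, (∑ m, f m * star (φ i m)) * φ i m' := by
        simp only [map_sum, map_mul, mul_sum]
        rw [sum_comm]
        refine sum_congr rfl fun m' _ => sum_congr rfl fun i _ => ?_
        simp only [RCLike.star_def, RingHomCompTriple.comp_apply, RingHom.id_apply]
        ring
    _ = ∑ m, c m * (f m * (starRingEnd ℂ) (f m)) := by
        simp only [sum_coeff_mul_eq_of_columns_orthogonal hφ]
        exact sum_congr rfl fun m _ => by ring

end OrthogonalColumns

theorem IsPrimitiveRoot.sum_pow_mul_star_pow {N : ℕ} {ζ : ℂ} (hζ : IsPrimitiveRoot ζ N)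
    (l l' : Fin N) :
    ∑ j : Fin N, (ζ ^ (l : ℕ)) ^ (j : ℕ) * star ((ζ ^ (l' : ℕ)) ^ (j : ℕ)) =
      if l = l' then (N : ℂ) else 0 := by
  have hN : N ≠ 0 := by have := l.pos; omega
  have hstar : star (ζ ^ (l' : ℕ)) = (ζ ^ (l' : ℕ))⁻¹ := by
    rw [Complex.inv_eq_conj (by rw [norm_pow, hζ.norm'_eq_one hN, one_pow])]; rfl
  set z := ζ ^ (l : ℕ) * (ζ ^ (l' : ℕ))⁻¹
  have hsum : ∑ j : Fin N, (ζ ^ (l : ℕ)) ^ (j : ℕ) * star ((ζ ^ (l' : ℕ)) ^ (j : ℕ)) =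
      ∑ j ∈ range N, z ^ j := by
    rw [← Fin.sum_univ_eq_sum_range]
    simp only [star_pow, hstar, z, mul_pow, inv_pow]
  rw [hsum]
  split_ifs with h
  · simp [z, h, hζ.ne_zero hN]
  · have hz1 : z ≠ 1 := fun hz => h <| Fin.ext <| hζ.pow_inj l.isLt l'.isLt <|
      by simpa [z, mul_inv_eq_one₀ (pow_ne_zero _ (hζ.ne_zero hN))] using hz
    have hzN : z ^ N = 1 := by
      simp only [z, mul_pow, inv_pow, pow_right_comm _ _ N, hζ.pow_eq_one, one_pow, inv_one,
        mul_one]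
    have hgeom := geom_sum_mul z N
    rw [hzN, sub_self] at hgeom
    exact (mul_eq_zero.mp hgeom).resolve_right (sub_ne_zero.mpr hz1)

theorem conj_diagonal_pow_mulVec {n R : Type*} [Fintype n] [DecidableEq n] [CommRing R]
    {U : Matrix n n R} (hU : IsUnit U.det) (a : n → R) (j : ℕ) (g : n → R) :
    (U * diagonal a * U⁻¹) ^ j *ᵥ g = U *ᵥ fun l => a l ^ j * (U⁻¹ *ᵥ g) l := by
  have hconj : (U * diagonal a * U⁻¹) ^ j = U * diagonal a ^ j * U⁻¹ :=
    Units.conj_pow ⟨U, U⁻¹, U.mul_nonsing_inv hU, U.nonsing_inv_mul hU⟩ (diagonal a) j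
  rw [hconj, diagonal_pow, ← mulVec_mulVec, ← mulVec_mulVec]
  congr 1
  ext l
  exact mulVec_diagonal _ _ l

theorem sum_norm_sq_conj_diagonal_pow_mulVec {n : Type*} [Fintype n] [DecidableEq n] {N : ℕ}
    {U : Matrix n n ℂ} (hU : IsUnit U.det) {a : n → ℂ}
    (ha : ∀ l l', ∑ j : Fin N, a l ^ (j : ℕ) * star (a l' ^ (j : ℕ)) =
      if l = l' then (N : ℂ) else 0)
    (g : n → ℂ) (m : n) :
    ∑ j : Fin N, ‖((U * diagonal a * U⁻¹) ^ (j : ℕ) *ᵥ g) m‖ ^ 2 =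
      N * ∑ l, ‖(U⁻¹ *ᵥ g) l‖ ^ 2 * ‖U m l‖ ^ 2 := by
  have hφ : ∀ l l', ∑ j : Fin N, star (star (a l ^ (j : ℕ))) * star (a l' ^ (j : ℕ)) =
      if l = l' then ((N : ℝ) : ℂ) else 0 := by
    simpa only [star_star, Complex.ofReal_natCast] using ha
  have hpow : ∀ j : ℕ, ((U * diagonal a * U⁻¹) ^ j *ᵥ g) m =
      ∑ l, U m l * (U⁻¹ *ᵥ g) l * star (star (a l ^ j)) := by
    intro j
    rw [conj_diagonal_pow_mulVec hU]
    simp only [mulVec, dotProduct, star_star]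
    exact sum_congr rfl fun l _ => by ring
  simp only [hpow, sum_norm_coeff_sq_eq_of_columns_orthogonal hφ, mul_sum, norm_mul,
    mul_pow]
  exact sum_congr rfl fun l _ => by ring

theorem sum_sum_star_mul_mul_of_mem_unitaryGroup {ι n : Type*} [Fintype ι] [Fintype n]
    [DecidableEq n] {U : Matrix n n ℂ} (hU : U ∈ unitaryGroup n ℂ) (w : ι → n → ℂ) (m m' : n) :
    ∑ j, ∑ k, star (w j m * U m k) * (w j m' * U m' k) =
      if m = m' then ((∑ j, ‖w j m'‖ ^ 2 : ℝ) : ℂ) else 0 := by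
  have hrows : ∑ k, U m' k * star (U m k) = if m = m' then 1 else 0 := by
    simpa [mul_apply, one_apply, eq_comm] using
      congrFun (congrFun (mem_unitaryGroup_iff.mp hU) m') m
  have hterm : ∀ j, ∑ k, star (w j m * U m k) * (w j m' * U m' k) =
      star (w j m) * w j m' * ∑ k, U m' k * star (U m k) := by
    intro j
    rw [mul_sum]
    exact sum_congr rfl fun k _ => by rw [star_mul']; ring
  simp only [hterm, hrows]
  split_ifs with h
  · subst h
    push_cast
    exact sum_congr rfl fun j _ => by rw [mul_one, ← Complex.conj_mul']; rfl
  · simp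

/-- With `a = (1, ω, …, ω^{N-1})`, `ω = e^{2πi/N}`, the `N²` atoms
`g_{j,k} = (1/√N)·(H_a^{j-1} g) ⊙ u_k` constitute a frame of `ℂ^N` with bounds
`α = min_n C_n`, `β = max_n C_n`, and the reconstruction formula holds. -/
theorem powers_windowed_fourier_frame (N : ℕ) (hN : 1 ≤ N)
    (U : Matrix (Fin N) (Fin N) ℂ) (hU : U ∈ Matrix.unitaryGroup (Fin N) ℂ)
    (g : Fin N → ℂ) (ghat : Fin N → ℂ) (hghat : ghat = U⁻¹.mulVec g)
    (C : Fin N → ℝ)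
    (hC : ∀ n, C n = ∑ l, ‖ghat l‖ ^ 2 * ‖U n l‖ ^ 2)
    (hCpos : ∀ n, 0 < C n)
    (a : Fin N → ℂ)
    (hadef : ∀ k, a k = Complex.exp (2 * Real.pi * Complex.I * (k : ℕ) / N))
    (atom : Fin N → Fin N → Fin N → ℂ)
    (hatom : ∀ j k n, atom j k n = (Real.sqrt N : ℂ)⁻¹ *
      ((U * Matrix.diagonal a * U⁻¹) ^ (j : ℕ)).mulVec g n * U n k) :
    (∀ f : Fin N → ℂ,
      (Finset.univ.inf' ⟨⟨0, hN⟩, Finset.mem_univ _⟩ C) *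
          ∑ n, ‖f n‖ ^ 2 ≤
        ∑ j, ∑ k, ‖∑ m, f m * star (atom j k m)‖ ^ 2 ∧
      ∑ j, ∑ k, ‖∑ m, f m * star (atom j k m)‖ ^ 2 ≤
        (Finset.univ.sup' ⟨⟨0, hN⟩, Finset.mem_univ _⟩ C) *
          ∑ n, ‖f n‖ ^ 2) ∧
    (∀ (f : Fin N → ℂ) (n : Fin N),
      f n = ((C n : ℂ))⁻¹ *
        ∑ j, ∑ k, (∑ m, f m * star (atom j k m)) * atom j k n) := by
  have hN0 : N ≠ 0 := by omega
  have hζ := Complex.isPrimitiveRoot_exp N hN0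
  have ha : ∀ l l', ∑ j : Fin N, a l ^ (j : ℕ) * star (a l' ^ (j : ℕ)) =
      if l = l' then (N : ℂ) else 0 := by
    have hpow : ∀ k : Fin N, a k = Complex.exp (2 * Real.pi * Complex.I / N) ^ (k : ℕ) := by
      intro k
      rw [hadef, ← Complex.exp_nat_mul]
      ring_nf
    simpa only [hpow] using hζ.sum_pow_mul_star_pow
  have hwindow : ∀ m, ∑ j : Fin N,
      ‖(Real.sqrt N : ℂ)⁻¹ * ((U * Matrix.diagonal a * U⁻¹) ^ (j : ℕ)).mulVec g m‖ ^ 2 =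
        C m := by
    intro m
    simp only [norm_mul, mul_pow, ← mul_sum,
      sum_norm_sq_conj_diagonal_pow_mulVec (UnitaryGroup.det_isUnit ⟨U, hU⟩) ha, hC, hghat]
    rw [norm_inv, Complex.norm_real, Real.norm_of_nonneg (Real.sqrt_nonneg _), inv_pow,
      Real.sq_sqrt (Nat.cast_nonneg N), inv_mul_cancel_left₀ (Nat.cast_ne_zero.mpr hN0)]
  have hgram : ∀ m m', ∑ p : Fin N × Fin N, star (atom p.1 p.2 m) * atom p.1 p.2 m' =
      if m = m' then (C m' : ℂ) else 0 := by
    intro m m'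
    simp only [Fintype.sum_prod_type, hatom]
    rw [sum_sum_star_mul_mul_of_mem_unitaryGroup hU fun (j n : Fin N) =>
      (Real.sqrt N : ℂ)⁻¹ * ((U * Matrix.diagonal a * U⁻¹) ^ (j : ℕ)).mulVec g n]
    simp only [hwindow]
  have hrecon := sum_coeff_mul_eq_of_columns_orthogonal hgram
  have henergy := sum_norm_coeff_sq_eq_of_columns_orthogonal hgram
  simp only [Fintype.sum_prod_type] at hrecon henergy
  refine ⟨fun f => ?_, fun f n => ?_⟩
  · rw [henergy, mul_sum, mul_sum]
    exact ⟨sum_le_sum fun m hm => by gcongr; exact inf'_le _ hm,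
      sum_le_sum fun m hm => by gcongr; exact le_sup' _ hm⟩
  · rw [hrecon, inv_mul_cancel_left₀ (Complex.ofReal_ne_zero.mpr (hCpos n).ne')]
end
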